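/- arXiv:1911.07491 — 5 statements merged into one kernel-verified Lean document; each statement's English description precedes it below -/
import Mathlib

section
/- Let $x, y$ be bounded self-adjoint operators on a Hilbert space. If $x \preceq y$ in the spectral order (i.e. $\chi_{(-\infty,\lambda]}(y) \le \chi_{(-\infty,\lambda]}(x)$ for all $\lambda\in\mathbb{R}$), then $x \le y$ in the L\"owner order (i.e. $y - x$ is a positive operator). -/
set_option synthInstance.maxHeartbeats 1000000
set_option maxHeartbeats 1000000

noncomputable section

/-- `E` is the spectral family (resolution of identity) of the self-adjoint element `x`,
i.e. `E l` is the spectral projection `χ_{(-∞,l]}(x)`. -/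
def IsSpectralFamily {A : Type*} [Ring A] [StarRing A] [PartialOrder A] [Module ℝ A]
    (x : A) (E : ℝ → A) : Prop :=
  (∀ l, IsSelfAdjoint (E l)) ∧ (∀ l, IsIdempotentElem (E l)) ∧
  Monotone E ∧
  (∀ l, IsGLB (E '' Set.Ioi l) (E l)) ∧
  (∃ a : ℝ, 0 < a ∧ (∀ l, l < -a → E l = 0) ∧ (∀ l, a < l → E l = 1)) ∧
  (∀ l, x * E l ≤ l • E l ∧ l • (1 - E l) ≤ x * (1 - E l))

/-- The spectral order: `x ⪯ y` iff `E^y_l ≤ E^x_l` for every `l : ℝ`. -/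
def SpecLE {A : Type*} [Ring A] [StarRing A] [PartialOrder A] [Module ℝ A] (x y : A) : Prop :=
  ∀ E F : ℝ → A, IsSpectralFamily x E → IsSpectralFamily y F → ∀ l, F l ≤ E l

variable {H : Type*} [NormedAddCommGroup H] [InnerProductSpace ℂ H] [CompleteSpace H]

namespace SpectralOrderAux

/-- Nonnegative real scalar multiples of nonneg operators are nonneg. -/
lemma real_smul_nonneg {r : ℝ} (hr : 0 ≤ r) {a : H →L[ℂ] H} (ha : 0 ≤ a) :
    0 ≤ r • a := by
  have h := star_left_conjugate_nonneg ha ((Real.sqrt r) • (1 : H →L[ℂ] H))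
  have hs : star ((Real.sqrt r) • (1 : H →L[ℂ] H)) = (Real.sqrt r) • (1 : H →L[ℂ] H) := by
    simp
  rw [hs] at h
  have hcalc : ((Real.sqrt r) • (1 : H →L[ℂ] H)) * a * ((Real.sqrt r) • (1 : H →L[ℂ] H))
      = (Real.sqrt r * Real.sqrt r) • a := by
    simp [smul_mul_assoc, mul_smul_comm, smul_smul]
  rwa [hcalc, Real.mul_self_sqrt hr] at h

lemma proj_nonneg {p : H →L[ℂ] H} (hid : IsIdempotentElem p) (hsa : IsSelfAdjoint p) :
    0 ≤ p := by
  have h := star_mul_self_nonneg p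
  rwa [hsa.star_eq, hid.eq] at h

/-- If `p ≤ q` are self-adjoint idempotents, then `p * q = p`. -/
lemma proj_mul_eq {p q : H →L[ℂ] H} (hpid : IsIdempotentElem p) (hqid : IsIdempotentElem q)
    (hpsa : IsSelfAdjoint p) (hqsa : IsSelfAdjoint q) (hle : p ≤ q) :
    p * q = p ∧ q * p = p := by
  have hqc : IsSelfAdjoint (1 - q) := ((IsSelfAdjoint.one (R := H →L[ℂ] H)).sub hqsa)
  have h1 : (1 - q) * p * (1 - q) ≤ (1 - q) * q * (1 - q) := by
    have := star_left_conjugate_le_conjugate hle (1 - q)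
    rwa [hqc.star_eq] at this
  have h2 : (1 - q) * q * (1 - q) = 0 := by
    have : (1 - q) * q = 0 := by
      rw [sub_mul, one_mul, hqid.eq, sub_self]
    rw [this, zero_mul]
  have h3 : (0 : H →L[ℂ] H) ≤ (1 - q) * p * (1 - q) := by
    have := star_left_conjugate_nonneg (proj_nonneg hpid hpsa) (1 - q)
    rwa [hqc.star_eq] at this
  have h4 : (1 - q) * p * (1 - q) = 0 := le_antisymm (h2 ▸ h1) h3
  have h5 : p * (1 - q) = 0 := by
    have hkey : star (p * (1 - q)) * (p * (1 - q)) = 0 := by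
      calc star (p * (1 - q)) * (p * (1 - q))
          = ((1 - q) * p) * (p * (1 - q)) := by rw [star_mul, hpsa.star_eq, hqc.star_eq]
        _ = (1 - q) * (p * p) * (1 - q) := by noncomm_ring
        _ = (1 - q) * p * (1 - q) := by rw [hpid.eq]
        _ = 0 := h4
    exact (CStarRing.star_mul_self_eq_zero_iff _).mp hkey
  have h6 : p * q = p := by
    have h' := h5
    rw [mul_sub, mul_one] at h'
    exact (sub_eq_zero.mp h').symm
  exact ⟨h6, by
    have := congrArg star h6
    rwa [star_mul, hpsa.star_eq, hqsa.star_eq] at this⟩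

lemma comm_of_family {x : H →L[ℂ] H} (hx : IsSelfAdjoint x) {E : ℝ → (H →L[ℂ] H)}
    (hE : IsSpectralFamily x E) (l : ℝ) : x * E l = E l * x := by
  obtain ⟨hsa, hid, hmono, -, -, hkey⟩ := hE
  have h1 : 0 ≤ l • E l - x * E l := sub_nonneg.mpr (hkey l).1
  have h2 : IsSelfAdjoint (l • E l - x * E l) := IsSelfAdjoint.of_nonneg h1
  have h3 : star (l • E l - x * E l) = l • E l - E l * x := by
    rw [star_sub, star_smul, star_mul, (hsa l).star_eq, hx.star_eq, star_trivial]
  have h4 : l • E l - E l * x = l • E l - x * E l := by rw [← h3]; exact h2.star_eq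
  have := sub_right_injective h4
  exact this.symm

lemma slice_bounds {x : H →L[ℂ] H} (hx : IsSelfAdjoint x) {E : ℝ → (H →L[ℂ] H)}
    (hE : IsSpectralFamily x E) {p q : ℝ} (hpq : p ≤ q) :
    x * (E q - E p) ≤ q • (E q - E p) ∧ p • (E q - E p) ≤ x * (E q - E p) := by
  have hcomm : ∀ l, x * E l = E l * x := comm_of_family hx hE
  obtain ⟨hsa, hid, hmono, -, -, hkey⟩ := hE
  obtain ⟨hm1, hm2⟩ := proj_mul_eq (hid p) (hid q) (hsa p) (hsa q) (hmono hpq)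
  set P := E q - E p with hP
  have hPsa : IsSelfAdjoint P := (hsa q).sub (hsa p)
  have hPq : P * E q = P := by rw [hP, sub_mul, (hid q).eq, hm1]
  have hqP : E q * P = P := by rw [hP, mul_sub, (hid q).eq, hm2]
  have hpP : E p * P = 0 := by rw [hP, mul_sub, hm1, (hid p).eq, sub_self]
  have hPp : P * E p = 0 := by rw [hP, sub_mul, hm2, (hid p).eq, sub_self]
  have hPP : P * P = P := by
    have : P * (E q - E p) = P * E q - P * E p := mul_sub _ _ _
    rw [← hP] at this
    rw [this, hPq, hPp, sub_zero]
  have hxP : x * P = P * x := by rw [hP, mul_sub, sub_mul, hcomm q, hcomm p]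
  constructor
  · have h1 := star_left_conjugate_le_conjugate (hkey q).1 P
    rw [hPsa.star_eq] at h1
    have hL : P * (x * E q) * P = x * P := by
      rw [← mul_assoc P x (E q), mul_assoc (P * x) (E q) P, hqP, ← hxP, mul_assoc, hPP]
    have hR : P * (q • E q) * P = q • P := by
      rw [mul_smul_comm, smul_mul_assoc, hPq, hPP]
    rwa [hL, hR] at h1
  · have h2 := star_left_conjugate_le_conjugate (hkey p).2 P
    rw [hPsa.star_eq] at h2
    have hP1 : P * (1 - E p) = P := by rw [mul_sub, mul_one, hPp, sub_zero]
    have h1P : (1 - E p) * P = P := by rw [sub_mul, one_mul, hpP, sub_zero]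
    have hL : P * (p • (1 - E p)) * P = p • P := by
      rw [mul_smul_comm, hP1, smul_mul_assoc, hPP]
    have hR : P * (x * (1 - E p)) * P = x * P := by
      rw [← mul_assoc P x (1 - E p), mul_assoc (P * x) (1 - E p) P, h1P, ← hxP, mul_assoc, hPP]
    rwa [hL, hR] at h2

lemma sum_parts (l : ℕ → ℝ) (ε : ℝ) (hl : ∀ i, l (i + 1) = l i + ε)
    (G : ℕ → (H →L[ℂ] H)) (n : ℕ) :
    ∑ i ∈ Finset.range n, (l (i + 1)) • (G (i + 1) - G i)
      = l n • G n - l 0 • G 0 - ε • ∑ i ∈ Finset.range n, G i := by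
  induction n with
  | zero => simp
  | succ n ih =>
    rw [Finset.sum_range_succ, Finset.sum_range_succ (f := G), ih, hl n]
    module

end SpectralOrderAux

open SpectralOrderAux in
/-- The spectral order implies the Löwner order. -/
theorem stmt6 (x y : H →L[ℂ] H) (hx : IsSelfAdjoint x) (hy : IsSelfAdjoint y)
    (Ex Ey : ℝ → (H →L[ℂ] H))
    (hEx : IsSpectralFamily x Ex) (hEy : IsSpectralFamily y Ey)
    (h : ∀ l, Ey l ≤ Ex l) : x ≤ y := by
  suffices key : ∀ ε : ℝ, 0 < ε → x ≤ y + ε • 1 by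
    rw [ContinuousLinearMap.le_def]
    refine ⟨ContinuousLinearMap.isSelfAdjoint_iff_isSymmetric.mp (hy.sub hx), fun ξ => ?_⟩
    have hv : ∀ ε : ℝ, 0 < ε → 0 ≤ (y - x).reApplyInnerSelf ξ + ε * ‖ξ‖ ^ 2 := by
      intro ε hε
      have h1 := key ε hε
      rw [ContinuousLinearMap.le_def] at h1
      have h2 := h1.2 ξ
      have h3 : (y + ε • 1 - x).reApplyInnerSelf ξ
          = (y - x).reApplyInnerSelf ξ + ε * ‖ξ‖ ^ 2 := by
        simp only [ContinuousLinearMap.reApplyInnerSelf_apply,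
          ContinuousLinearMap.sub_apply, ContinuousLinearMap.add_apply,
          ContinuousLinearMap.smul_apply, ContinuousLinearMap.one_apply]
        rw [show y ξ + ε • ξ - x ξ = (y ξ - x ξ) + ε • ξ by abel]
        rw [inner_add_left, map_add]
        congr 1
        rw [RCLike.real_smul_eq_coe_smul (K := ℂ), inner_smul_left, RCLike.conj_ofReal,
          RCLike.re_ofReal_mul, inner_self_eq_norm_sq]
      rwa [h3] at h2
    by_contra hneg
    push_neg at hneg
    set v := (y - x).reApplyInnerSelf ξ with hvdef
    have hn : (0 : ℝ) ≤ ‖ξ‖ ^ 2 := sq_nonneg _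
    rcases hn.eq_or_lt with hz | hpos
    · have := hv 1 one_pos
      rw [← hz] at this
      linarith
    · have hε : 0 < -v / (2 * ‖ξ‖ ^ 2) := div_pos (neg_pos.mpr hneg) (by linarith)
      have h2 := hv _ hε
      have h3 : (-v / (2 * ‖ξ‖ ^ 2)) * ‖ξ‖ ^ 2 = -v / 2 := by
        field_simp
        rw [mul_div_assoc, div_self (by intro h0; simp [h0] at hpos), mul_one]
      rw [h3] at h2
      linarith
  intro ε hε
  have hEx' := hEx
  have hEy' := hEy
  obtain ⟨hsaX, hidX, hmonoX, -, ⟨a, ha0, haE0, haE1⟩, hkeyX⟩ := hEx'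
  obtain ⟨hsaY, hidY, hmonoY, -, ⟨b, hb0, hbF0, hbF1⟩, hkeyY⟩ := hEy'
  set c : ℝ := max a b + 1 with hc
  have hca : a < c := lt_of_le_of_lt (le_max_left a b) (by simp [hc])
  have hcb : b < c := lt_of_le_of_lt (le_max_right a b) (by simp [hc])
  have hc0 : 0 < c := lt_trans ha0 hca
  obtain ⟨n, hn⟩ := exists_nat_gt ((c + c) / ε)
  set l : ℕ → ℝ := fun i => -c + i * ε with hldef
  have hl0 : l 0 = -c := by simp [hldef]
  have hlsucc : ∀ i, l (i + 1) = l i + ε := by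
    intro i; simp only [hldef]; push_cast; ring
  have hmono_l : ∀ i : ℕ, l i ≤ l (i + 1) := fun i => by rw [hlsucc i]; linarith
  have hln : c < l n := by
    have h1 : (c + c) / ε < n := hn
    have h2 : c + c < n * ε := by
      rw [div_lt_iff₀ hε] at h1; linarith
    simp only [hldef]; linarith
  have hEx0 : Ex (l 0) = 0 := haE0 _ (by rw [hl0]; linarith)
  have hEy0 : Ey (l 0) = 0 := hbF0 _ (by rw [hl0]; linarith)
  have hExn : Ex (l n) = 1 := haE1 _ (by linarith)
  have hEyn : Ey (l n) = 1 := hbF1 _ (by linarith)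
  -- the Riemann-sum upper step operators
  set SX := ∑ i ∈ Finset.range n, (l (i + 1)) • (Ex (l (i + 1)) - Ex (l i)) with hSX
  set SY := ∑ i ∈ Finset.range n, (l (i + 1)) • (Ey (l (i + 1)) - Ey (l i)) with hSY
  -- Claim A : x ≤ SX
  have hsumX : ∑ i ∈ Finset.range n, (Ex (l (i + 1)) - Ex (l i)) = 1 := by
    rw [Finset.sum_range_sub (fun i => Ex (l i)), hExn, hEx0, sub_zero]
  have hA : x ≤ SX := by
    have hx1 : x = ∑ i ∈ Finset.range n, x * (Ex (l (i + 1)) - Ex (l i)) := by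
      rw [← Finset.mul_sum, hsumX, mul_one]
    rw [hx1, hSX]
    exact Finset.sum_le_sum fun i _ => (slice_bounds hx hEx (hmono_l i)).1
  -- Claim B : SY ≤ y + ε • 1
  have hsumY : ∑ i ∈ Finset.range n, (Ey (l (i + 1)) - Ey (l i)) = 1 := by
    rw [Finset.sum_range_sub (fun i => Ey (l i)), hEyn, hEy0, sub_zero]
  have hB : SY ≤ y + ε • 1 := by
    have hy1 : ∑ i ∈ Finset.range n, (l i) • (Ey (l (i + 1)) - Ey (l i)) ≤ y := by
      have hy2 : y = ∑ i ∈ Finset.range n, y * (Ey (l (i + 1)) - Ey (l i)) := by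
        rw [← Finset.mul_sum, hsumY, mul_one]
      conv_rhs => rw [hy2]
      exact Finset.sum_le_sum fun i _ => (slice_bounds hy hEy (hmono_l i)).2
    have hsplit : SY = ∑ i ∈ Finset.range n, (l i) • (Ey (l (i + 1)) - Ey (l i)) + ε • 1 := by
      rw [hSY, ← hsumY, Finset.smul_sum, ← Finset.sum_add_distrib]
      refine Finset.sum_congr rfl fun i _ => ?_
      rw [hlsucc i, add_smul]
    rw [hsplit]
    exact add_le_add_left hy1 _
  -- Claim C : SX ≤ SY
  have hC : SX ≤ SY := by
    have eX := sum_parts l ε hlsucc (fun i => Ex (l i)) n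
    have eY := sum_parts l ε hlsucc (fun i => Ey (l i)) n
    rw [hExn, hEx0] at eX
    rw [hEyn, hEy0] at eY
    rw [hSX, hSY, eX, eY]
    have hd : 0 ≤ ε • ∑ i ∈ Finset.range n, Ex (l i) - ε • ∑ i ∈ Finset.range n, Ey (l i) := by
      rw [← smul_sub, ← Finset.sum_sub_distrib]
      exact real_smul_nonneg hε.le
        (Finset.sum_nonneg fun i _ => sub_nonneg.mpr (h (l i)))
    have := sub_nonneg.mp hd
    -- goal : l n • 1 - l 0 • 0 - ε • ΣEx ≤ l n • 1 - l 0 • 0 - ε • ΣEy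
    exact sub_le_sub_left this _
  exact le_trans hA (le_trans hC hB)
end
end

section
/- Let $f:\mathbb{R}\to\mathbb{R}$ be a strictly increasing continuous bijection. Then the map $x \mapsto f(x)$ (continuous functional calculus) on the set of bounded self-adjoint operators on a Hilbert space is a spectral order automorphism: for all self-adjoint $x, y$, one has $x \preceq y$ if and only if $f(x) \preceq f(y)$. -/
set_option maxHeartbeats 1000000
set_option synthInstance.maxHeartbeats 400000


noncomputable section

variable {H : Type*} [NormedAddCommGroup H] [InnerProductSpace ℂ H] [CompleteSpace H]

namespace SpectralOrderAux

open Polynomial Set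

local notation "𝓐" => H →L[ℂ] H

lemma sa_of_le {a b : 𝓐} (h : a ≤ b) (hb : IsSelfAdjoint b) : IsSelfAdjoint a := by
  have h1 : IsSelfAdjoint (b - a) := .of_nonneg (sub_nonneg.mpr h)
  simpa using hb.sub h1

lemma sa_of_ge {a b : 𝓐} (h : b ≤ a) (hb : IsSelfAdjoint b) : IsSelfAdjoint a := by
  have h1 : IsSelfAdjoint (a - b) := .of_nonneg (sub_nonneg.mpr h)
  simpa using h1.add hb

lemma sa_smul {r : ℝ} {a : 𝓐} (ha : IsSelfAdjoint a) : IsSelfAdjoint (r • a) := by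
  rw [IsSelfAdjoint, star_smul, star_trivial, ha.star_eq]

lemma commute_of_sa_mul {x e : 𝓐} (hx : IsSelfAdjoint x) (he : IsSelfAdjoint e)
    (h : IsSelfAdjoint (x * e)) : Commute x e := by
  have h2 := h.star_eq
  rw [star_mul, hx.star_eq, he.star_eq] at h2
  exact h2.symm

lemma commute_left {x e : 𝓐} {l : ℝ} (hx : IsSelfAdjoint x) (he : IsSelfAdjoint e)
    (h : x * e ≤ l • e) : Commute x e :=
  commute_of_sa_mul hx he (sa_of_le h (sa_smul he))

lemma commute_right {x e : 𝓐} {l : ℝ} (hx : IsSelfAdjoint x) (he : IsSelfAdjoint e)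
    (h : l • e ≤ x * e) : Commute x e :=
  commute_of_sa_mul hx he (sa_of_ge h (sa_smul he))

lemma spectrum_bound {a : 𝓐} (ha : IsSelfAdjoint a) {R : ℝ} (hR : ‖a‖ ≤ R) :
    ∀ t ∈ spectrum ℝ a, t ∈ Set.Icc (-R) R := by
  intro t ht
  constructor
  · have h1 : algebraMap ℝ 𝓐 (-‖a‖) ≤ a := by
      simpa [map_neg] using ha.neg_algebraMap_norm_le_self
    have h2 := (algebraMap_le_iff_le_spectrum (a := a) ha).mp h1 t ht
    linarith
  · exact le_trans ((le_algebraMap_iff_spectrum_le (a := a) ha).mp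
      ha.le_algebraMap_norm_self t ht) hR

lemma aeval_commute {a b : 𝓐} (h : Commute a b) (q : ℝ[X]) : Commute (aeval a q) b := by
  induction q using Polynomial.induction_on' with
  | add p q hp hq => rw [map_add]; exact hp.add_left hq
  | monomial n c =>
    rw [aeval_monomial]
    exact (Algebra.commute_algebraMap_left c b).mul_left (h.pow_left n)

lemma norm_cfc_sub_aeval {z : 𝓐} (hz : IsSelfAdjoint z) {φ : ℝ → ℝ} (hφ : Continuous φ)
    {δ R : ℝ} (hδ : 0 ≤ δ) (hR : ‖z‖ ≤ R) {p : ℝ[X]}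
    (hp : ∀ t ∈ Set.Icc (-R) R, |eval t p - φ t| < δ) : ‖cfc φ z - aeval z p‖ ≤ δ := by
  have h1 : cfc φ z - aeval z p = cfc (fun t => φ t - eval t p) z := by
    rw [cfc_sub φ (fun t => eval t p) z hφ.continuousOn (p.continuous_aeval).continuousOn]
    rw [show (cfc (fun t => eval t p) z : 𝓐) = aeval z p from cfc_polynomial p z hz]
  rw [h1]
  refine norm_cfc_le hδ fun t ht => ?_
  have h2 := spectrum_bound hz hR t ht
  rw [Real.norm_eq_abs, abs_sub_comm]
  exact (hp t h2).le

lemma cfc_commute_of_commute {z b : 𝓐} (hz : IsSelfAdjoint z) (h : Commute z b)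
    {φ : ℝ → ℝ} (hφ : Continuous φ) : Commute (cfc φ z) b := by
  have key : ∀ ε : ℝ, 0 < ε → ‖cfc φ z * b - b * cfc φ z‖ ≤ ε := by
    intro ε hε
    set δ := ε / (2 * ‖b‖ + 1) with hδdef
    have hδ : 0 < δ := div_pos hε (by positivity)
    obtain ⟨p, hp⟩ := exists_polynomial_near_of_continuousOn (-‖z‖) ‖z‖ φ hφ.continuousOn δ hδ
    have hb1 : ‖cfc φ z - aeval z p‖ ≤ δ := norm_cfc_sub_aeval hz hφ hδ.le le_rfl hp
    have hcomm := (aeval_commute h p).eq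
    have heq : cfc φ z * b - b * cfc φ z
        = (cfc φ z - aeval z p) * b - b * (cfc φ z - aeval z p) := by
      rw [sub_mul, mul_sub, hcomm]; abel
    calc ‖cfc φ z * b - b * cfc φ z‖
        = ‖(cfc φ z - aeval z p) * b - b * (cfc φ z - aeval z p)‖ := by rw [heq]
      _ ≤ ‖(cfc φ z - aeval z p) * b‖ + ‖b * (cfc φ z - aeval z p)‖ := norm_sub_le _ _
      _ ≤ ‖cfc φ z - aeval z p‖ * ‖b‖ + ‖b‖ * ‖cfc φ z - aeval z p‖ :=
          add_le_add (norm_mul_le _ _) (norm_mul_le _ _)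
      _ ≤ δ * ‖b‖ + ‖b‖ * δ := add_le_add
          (mul_le_mul_of_nonneg_right hb1 (norm_nonneg b))
          (mul_le_mul_of_nonneg_left hb1 (norm_nonneg b))
      _ ≤ ε := by
          have h2 : δ * (2 * ‖b‖ + 1) = ε := div_mul_cancel₀ ε (by positivity)
          nlinarith [norm_nonneg b, hδ.le]
  have h0 : ‖cfc φ z * b - b * cfc φ z‖ ≤ 0 :=
    le_of_forall_pos_le_add (fun ε hε => by simpa using key ε hε)
  exact sub_eq_zero.mp (norm_le_zero_iff.mp h0)

lemma cfc_mul_eq_of_proj {z y P : 𝓐} (hz : IsSelfAdjoint z) (hy : IsSelfAdjoint y)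
    (hzy : Commute z y) (hP2 : IsIdempotentElem P)
    (heq : z * P = y * P) {φ : ℝ → ℝ} (hφ : Continuous φ) : cfc φ z * P = cfc φ y * P := by
  have hpow : ∀ n : ℕ, z ^ n * P = y ^ n * P := by
    intro n; induction n with
    | zero => simp
    | succ n ih =>
      calc z ^ (n + 1) * P = z ^ n * (z * P) := by rw [pow_succ, mul_assoc]
        _ = z ^ n * (y * P) := by rw [heq]
        _ = y * (z ^ n * P) := by rw [← mul_assoc, (hzy.pow_left n).eq, mul_assoc]
        _ = y * (y ^ n * P) := by rw [ih]
        _ = y ^ (n + 1) * P := by rw [← mul_assoc, ← pow_succ']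
  have haev : ∀ q : ℝ[X], aeval z q * P = aeval y q * P := by
    intro q
    induction q using Polynomial.induction_on' with
    | add r s hr hs => rw [map_add, map_add, add_mul, add_mul, hr, hs]
    | monomial n c => rw [aeval_monomial, aeval_monomial, mul_assoc, mul_assoc, hpow]
  set R := max ‖z‖ ‖y‖ with hRdef
  have key : ∀ ε : ℝ, 0 < ε → ‖cfc φ z * P - cfc φ y * P‖ ≤ ε := by
    intro ε hε
    set δ := ε / (2 * ‖P‖ + 1) with hδdef
    have hδ : 0 < δ := div_pos hε (by positivity)
    obtain ⟨p, hp⟩ := exists_polynomial_near_of_continuousOn (-R) R φ hφ.continuousOn δ hδ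
    have h1 := norm_cfc_sub_aeval hz hφ hδ.le (le_max_left ‖z‖ ‖y‖) hp
    have h2 := norm_cfc_sub_aeval hy hφ hδ.le (le_max_right ‖z‖ ‖y‖) hp
    have heq2 : cfc φ z * P - cfc φ y * P
        = (cfc φ z - aeval z p) * P - (cfc φ y - aeval y p) * P := by
      rw [sub_mul, sub_mul, haev p]; abel
    calc ‖cfc φ z * P - cfc φ y * P‖
        = ‖(cfc φ z - aeval z p) * P - (cfc φ y - aeval y p) * P‖ := by rw [heq2]
      _ ≤ ‖(cfc φ z - aeval z p) * P‖ + ‖(cfc φ y - aeval y p) * P‖ := norm_sub_le _ _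
      _ ≤ ‖cfc φ z - aeval z p‖ * ‖P‖ + ‖cfc φ y - aeval y p‖ * ‖P‖ :=
          add_le_add (norm_mul_le _ _) (norm_mul_le _ _)
      _ ≤ δ * ‖P‖ + δ * ‖P‖ := add_le_add
          (mul_le_mul_of_nonneg_right h1 (norm_nonneg _))
          (mul_le_mul_of_nonneg_right h2 (norm_nonneg _))
      _ ≤ ε := by
          have h3 : δ * (2 * ‖P‖ + 1) = ε := div_mul_cancel₀ ε (by positivity)
          nlinarith [norm_nonneg P, hδ.le]
  have h0 : ‖cfc φ z * P - cfc φ y * P‖ ≤ 0 :=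
    le_of_forall_pos_le_add (fun ε hε => by simpa using key ε hε)
  exact sub_eq_zero.mp (norm_le_zero_iff.mp h0)

lemma proj_nonneg_s9 {P : 𝓐} (hP : IsSelfAdjoint P) (hP2 : IsIdempotentElem P) : 0 ≤ P := by
  have h := star_mul_self_nonneg P
  rwa [hP.star_eq, hP2.eq] at h

lemma proj_le_one {P : 𝓐} (hP : IsSelfAdjoint P) (hP2 : IsIdempotentElem P) : P ≤ 1 := by
  have h := proj_nonneg_s9 ((IsSelfAdjoint.one (R := 𝓐)).sub hP) hP2.one_sub
  exact sub_nonneg.mp h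

/-- Key upper estimate: monotone functional calculus pushed through a commuting projection. -/
lemma cfc_mul_proj_le {z P : 𝓐} {μ : ℝ} (hz : IsSelfAdjoint z) (hP : IsSelfAdjoint P)
    (hP2 : IsIdempotentElem P) (hc : Commute z P) (hle : z * P ≤ μ • P)
    {φ : ℝ → ℝ} (hφ : Continuous φ) (hm : Monotone φ) : cfc φ z * P ≤ φ μ • P := by
  set y := z * P + μ • (1 - P) with hydef
  have hzP_sa : IsSelfAdjoint (z * P) := by
    rw [IsSelfAdjoint, star_mul, hP.star_eq, hz.star_eq]; exact hc.eq.symm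
  have h1msa : IsSelfAdjoint ((1 : 𝓐) - P) := (IsSelfAdjoint.one (R := 𝓐)).sub hP
  have hysa : IsSelfAdjoint y := hzP_sa.add (sa_smul h1msa)
  have hyP : Commute y P :=
    (hc.mul_left (Commute.refl P)).add_left
      (((Commute.one_left P).sub_left (Commute.refl P)).smul_left μ)
  have hzy : Commute z y :=
    ((Commute.refl z).mul_right hc).add_right
      (((Commute.one_right z).sub_right hc).smul_right μ)
  have hyPeq : y * P = z * P := by
    rw [hydef, add_mul, smul_mul_assoc, sub_mul, one_mul, hP2.eq, sub_self, smul_zero,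
      add_zero, mul_assoc, hP2.eq]
  have hyle : y ≤ algebraMap ℝ 𝓐 μ := by
    have h1 : y ≤ μ • P + μ • ((1 : 𝓐) - P) := add_le_add hle le_rfl
    have h2 : μ • P + μ • ((1 : 𝓐) - P) = μ • (1 : 𝓐) := by
      rw [← smul_add]
      congr 1
      abel
    rw [Algebra.algebraMap_eq_smul_one]
    exact h1.trans (le_of_eq h2)
  have hspec : ∀ t ∈ spectrum ℝ y, φ t ≤ φ μ := fun t ht =>
    hm ((le_algebraMap_iff_spectrum_le (a := y) hysa).mp hyle t ht)
  have hcfc_le : cfc φ y ≤ algebraMap ℝ 𝓐 (φ μ) :=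
    (cfc_le_algebraMap_iff φ (φ μ) y hφ.continuousOn hysa).mpr hspec
  have hkey : cfc φ z * P = cfc φ y * P :=
    cfc_mul_eq_of_proj hz hysa hzy hP2 hyPeq.symm hφ
  have hcP : Commute (cfc φ y) P := cfc_commute_of_commute hysa hyP hφ
  have hconj := star_left_conjugate_le_conjugate hcfc_le P
  rw [hP.star_eq] at hconj
  have hl : P * cfc φ y * P = cfc φ y * P := by rw [← hcP.eq, mul_assoc, hP2.eq]
  have hr : P * algebraMap ℝ 𝓐 (φ μ) * P = φ μ • P := by
    rw [Algebra.algebraMap_eq_smul_one, mul_smul_comm, mul_one, smul_mul_assoc, hP2.eq]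
  rw [hl, hr] at hconj
  rw [hkey]; exact hconj

lemma proj_le_cfc_mul {z P : 𝓐} {μ : ℝ} (hz : IsSelfAdjoint z) (hP : IsSelfAdjoint P)
    (hP2 : IsIdempotentElem P) (hc : Commute z P) (hle : z * P ≤ μ • P)
    {φ : ℝ → ℝ} (hφ : Continuous φ) (hm : Antitone φ) : φ μ • P ≤ cfc φ z * P := by
  have h := cfc_mul_proj_le hz hP hP2 hc hle (φ := fun t => -φ t) hφ.neg
    (fun s t hst => neg_le_neg (hm hst))
  rw [cfc_neg φ z, neg_mul, neg_smul, neg_le_neg_iff] at h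
  exact h

lemma smul_proj_le_cfc_mul {z Q : 𝓐} {μ : ℝ} (hz : IsSelfAdjoint z) (hQ : IsSelfAdjoint Q)
    (hQ2 : IsIdempotentElem Q) (hc : Commute z Q) (hle : μ • Q ≤ z * Q)
    {φ : ℝ → ℝ} (hφ : Continuous φ) (hm : Monotone φ) : φ μ • Q ≤ cfc φ z * Q := by
  have hle' : (-z) * Q ≤ (-μ) • Q := by
    rw [neg_mul, neg_smul]; exact neg_le_neg hle
  have h := proj_le_cfc_mul hz.neg hQ hQ2 hc.neg_left hle' (φ := fun t => φ (-t))
    (hφ.comp continuous_neg) (fun s t hst => hm (neg_le_neg hst))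
  simp only [neg_neg] at h
  have h2 : cfc (fun t => φ (-t)) (-z) = cfc φ z := by
    have h3 := cfc_comp_neg (f := φ) (a := (-z : 𝓐)) (by fun_prop) hz.neg
    rwa [neg_neg] at h3
  rwa [h2] at h

lemma cfc_mul_le_smul_proj {z Q : 𝓐} {μ : ℝ} (hz : IsSelfAdjoint z) (hQ : IsSelfAdjoint Q)
    (hQ2 : IsIdempotentElem Q) (hc : Commute z Q) (hle : μ • Q ≤ z * Q)
    {φ : ℝ → ℝ} (hφ : Continuous φ) (hm : Antitone φ) : cfc φ z * Q ≤ φ μ • Q := by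
  have h := smul_proj_le_cfc_mul hz hQ hQ2 hc hle (φ := fun t => -φ t) hφ.neg
    (fun s t hst => neg_le_neg (hm hst))
  rw [cfc_neg φ z, neg_smul, neg_mul, neg_le_neg_iff] at h
  exact h

/-- One half of uniqueness of spectral families. -/
lemma specFamily_le {z : 𝓐} (hz : IsSelfAdjoint z) {E F : ℝ → 𝓐}
    (hE : IsSpectralFamily z E) (hF : IsSpectralFamily z F) (l : ℝ) : E l ≤ F l := by
  obtain ⟨hEsa, hEid, hEmono, hEglb, hEbd, hEineq⟩ := hE
  obtain ⟨hFsa, hFid, hFmono, hFglb, hFbd, hFineq⟩ := hF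
  have key : ∀ m, l < m → E l ≤ F m := by
    intro m hlm
    have hml : (0 : ℝ) < m - l := sub_pos.mpr hlm
    set φ : ℝ → ℝ := fun t => max 0 (min 1 ((m - t) / (m - l))) with hφdef
    have hφcont : Continuous φ := by
      apply continuous_const.max
      apply continuous_const.min
      exact (continuous_const.sub continuous_id).div_const _
    have hφanti : Antitone φ := by
      intro s t hst
      apply max_le_max le_rfl
      apply min_le_min le_rfl
      gcongr
    have hφ0 : ∀ t, 0 ≤ φ t := fun t => le_max_left _ _
    have hφ1 : ∀ t, φ t ≤ 1 := fun t => max_le zero_le_one (min_le_left _ _)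
    have hφl : φ l = 1 := by
      simp [hφdef, div_self hml.ne']
    have hφm : φ m = 0 := by simp [hφdef]
    have hPsa := hEsa l
    have hPid := hEid l
    have hQsa : IsSelfAdjoint ((1 : 𝓐) - F m) := (IsSelfAdjoint.one (R := 𝓐)).sub (hFsa m)
    have hQid : IsIdempotentElem ((1 : 𝓐) - F m) := (hFid m).one_sub
    have hzP : Commute z (E l) := commute_left hz hPsa (hEineq l).1
    have hzFm : Commute z (F m) := commute_left hz (hFsa m) (hFineq m).1
    have hzQ : Commute z ((1 : 𝓐) - F m) := (Commute.one_right z).sub_right hzFm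
    -- cfc φ z * E l = E l
    have hc1 : φ l • E l ≤ cfc φ z * E l :=
      proj_le_cfc_mul hz hPsa hPid hzP (hEineq l).1 hφcont hφanti
    have hcφP : Commute (cfc φ z) (E l) := cfc_commute_of_commute hz hzP hφcont
    have hub : cfc φ z * E l ≤ E l := by
      have h1 : cfc φ z ≤ 1 := (cfc_le_one_iff φ z hφcont.continuousOn hz).mpr fun t _ => hφ1 t
      have h2 := star_left_conjugate_le_conjugate h1 (E l)
      rw [hPsa.star_eq] at h2
      calc cfc φ z * E l = E l * cfc φ z * E l := by
            rw [← hcφP.eq, mul_assoc, hPid.eq]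
        _ ≤ E l * 1 * E l := h2
        _ = E l := by rw [mul_one, hPid.eq]
    have hPeq : cfc φ z * E l = E l := le_antisymm hub (by simpa [hφl] using hc1)
    -- cfc φ z * (1 - F m) = 0
    have hc2 : cfc φ z * ((1 : 𝓐) - F m) ≤ φ m • ((1 : 𝓐) - F m) :=
      cfc_mul_le_smul_proj hz hQsa hQid hzQ (hFineq m).2 hφcont hφanti
    have hcφQ : Commute (cfc φ z) ((1 : 𝓐) - F m) := cfc_commute_of_commute hz hzQ hφcont
    have hlb : (0 : 𝓐) ≤ cfc φ z * ((1 : 𝓐) - F m) := by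
      have h1 : (0 : 𝓐) ≤ cfc φ z := cfc_nonneg fun t _ => hφ0 t
      have h2 := star_left_conjugate_le_conjugate h1 ((1 : 𝓐) - F m)
      rw [hQsa.star_eq] at h2
      calc (0 : 𝓐) = ((1 : 𝓐) - F m) * 0 * ((1 : 𝓐) - F m) := by simp
        _ ≤ ((1 : 𝓐) - F m) * cfc φ z * ((1 : 𝓐) - F m) := h2
        _ = cfc φ z * ((1 : 𝓐) - F m) := by rw [← hcφQ.eq, mul_assoc, hQid.eq]
    have hQeq : cfc φ z * ((1 : 𝓐) - F m) = 0 :=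
      le_antisymm (by simpa [hφm] using hc2) hlb
    -- (1 - F m) * E l = 0
    have hQP : ((1 : 𝓐) - F m) * E l = 0 := by
      calc ((1 : 𝓐) - F m) * E l = ((1 : 𝓐) - F m) * (cfc φ z * E l) := by rw [hPeq]
        _ = (cfc φ z * ((1 : 𝓐) - F m)) * E l := by rw [← mul_assoc, ← hcφQ.eq]
        _ = 0 := by rw [hQeq, zero_mul]
    have h5 : E l = F m * E l := by
      have h6 := hQP
      rw [sub_mul, one_mul, sub_eq_zero] at h6
      exact h6
    have h6 : E l = E l * F m := by
      have h7 := congrArg star h5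
      rwa [(hEsa l).star_eq, star_mul, (hEsa l).star_eq, (hFsa m).star_eq] at h7
    have hle1 : E l ≤ 1 := proj_le_one (hEsa l) (hEid l)
    have h8 : E l = F m * E l * F m := by
      rw [mul_assoc, ← h6, ← h5]
    calc E l = F m * E l * F m := h8
      _ ≤ F m * 1 * F m := by
          have h9 := star_left_conjugate_le_conjugate hle1 (F m)
          rwa [(hFsa m).star_eq] at h9
      _ = F m := by rw [mul_one, (hFid m).eq]
  have hlow : E l ∈ lowerBounds (F '' Set.Ioi l) := by
    rintro b ⟨m, hm, rfl⟩
    exact key m hm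
  exact (hFglb l).2 hlow

lemma specFamily_unique {z : 𝓐} (hz : IsSelfAdjoint z) {E F : ℝ → 𝓐}
    (hE : IsSpectralFamily z E) (hF : IsSpectralFamily z F) : E = F :=
  funext fun l => le_antisymm (specFamily_le hz hE hF l) (specFamily_le hz hF hE l)

/-- Transport of a spectral family along a strictly monotone continuous surjection. -/
lemma isSpectralFamily_comp {x : 𝓐} (hx : IsSelfAdjoint x) {E : ℝ → 𝓐}
    (hE : IsSpectralFamily x E) (f : ℝ → ℝ) (hmono : StrictMono f) (hcont : Continuous f)
    (hsurj : Function.Surjective f) :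
    IsSpectralFamily (cfc f x)
      (fun l => E ((StrictMono.orderIsoOfSurjective f hmono hsurj).symm l)) := by
  obtain ⟨hsa, hid, hm, hglb, ⟨a, ha0, hbot, htop⟩, hineq⟩ := hE
  set e := StrictMono.orderIsoOfSurjective f hmono hsurj with hedef
  have hef : ∀ t, e t = f t := fun t => rfl
  refine ⟨fun l => hsa _, fun l => hid _, fun s t hst => hm (e.symm.monotone hst), ?_, ?_, ?_⟩
  · intro l
    have himg : (fun l => E (e.symm l)) '' Set.Ioi l = E '' Set.Ioi (e.symm l) := by
      rw [show ((fun l => E (e.symm l)) '' Set.Ioi l) = E '' (e.symm '' Set.Ioi l) from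
        (Set.image_image E e.symm _).symm, OrderIso.image_Ioi]
    rw [himg]
    exact hglb _
  · refine ⟨max 1 (max (f a) (-(f (-a)))), lt_of_lt_of_le zero_lt_one (le_max_left _ _), ?_, ?_⟩
    · intro l hl
      apply hbot
      have h1 : l < f (-a) := by
        have h2 : -(f (-a)) ≤ max 1 (max (f a) (-(f (-a)))) :=
          le_trans (le_max_right _ _) (le_max_right _ _)
        have h3 : -(max 1 (max (f a) (-(f (-a))))) ≤ f (-a) := neg_le.mpr h2
        linarith
      calc e.symm l < e.symm (f (-a)) := e.symm.strictMono h1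
        _ = -a := e.symm_apply_apply (-a)
    · intro l hl
      apply htop
      have h1 : f a < l := by
        have h2 : f a ≤ max 1 (max (f a) (-(f (-a)))) :=
          le_trans (le_max_left _ _) (le_max_right _ _)
        linarith
      calc a = e.symm (f a) := (e.symm_apply_apply a).symm
        _ < e.symm l := e.symm.strictMono h1
  · intro l
    have hfμ : f (e.symm l) = l := e.apply_symm_apply l
    have hcomm : Commute x (E (e.symm l)) := commute_left hx (hsa _) (hineq _).1
    have hcommQ : Commute x ((1 : 𝓐) - E (e.symm l)) := (Commute.one_right x).sub_right hcomm
    constructor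
    · have h1 := cfc_mul_proj_le hx (hsa _) (hid _) hcomm (hineq (e.symm l)).1 hcont
        hmono.monotone
      rwa [hfμ] at h1
    · have h1 := smul_proj_le_cfc_mul hx ((IsSelfAdjoint.one (R := 𝓐)).sub (hsa _)) (hid _).one_sub
        hcommQ (hineq (e.symm l)).2 hcont hmono.monotone
      rwa [hfμ] at h1

end SpectralOrderAux

open SpectralOrderAux in
/-- For a strictly increasing continuous bijection `f : ℝ → ℝ`, the functional calculus
`x ↦ f(x)` preserves the spectral order in both directions. -/
theorem stmt9 (f : ℝ → ℝ) (hmono : StrictMono f) (hcont : Continuous f)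
    (hbij : Function.Bijective f)
    (x y : H →L[ℂ] H) (hx : IsSelfAdjoint x) (hy : IsSelfAdjoint y)
    (Ex Ey Fx Fy : ℝ → (H →L[ℂ] H))
    (hEx : IsSpectralFamily x Ex) (hEy : IsSpectralFamily y Ey)
    (hFx : IsSpectralFamily (cfc f x) Fx) (hFy : IsSpectralFamily (cfc f y) Fy) :
    (∀ l, Ey l ≤ Ex l) ↔ (∀ l, Fy l ≤ Fx l) := by
  set e := StrictMono.orderIsoOfSurjective f hmono hbij.2 with hedef
  have hfx : IsSelfAdjoint (cfc f x) := cfc_predicate f x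
  have hfy : IsSelfAdjoint (cfc f y) := cfc_predicate f y
  have h1 : Fx = fun l => Ex (e.symm l) :=
    specFamily_unique hfx hFx (isSpectralFamily_comp hx hEx f hmono hcont hbij.2)
  have h2 : Fy = fun l => Ey (e.symm l) :=
    specFamily_unique hfy hFy (isSpectralFamily_comp hy hEy f hmono hcont hbij.2)
  constructor
  · intro h l
    rw [h1, h2]
    exact h _
  · intro h l
    have h3 := h (f l)
    rw [h1, h2] at h3
    simpa only [show e.symm (f l) = l from e.symm_apply_apply l] using h3
end
end

section
/- Let $\psi:A\to B$ be a Jordan *-isomorphism between unital C*-algebras and $x \in A$ self-adjoint. Then $\psi$ intertwines spectral projections: $\chi_{(-\infty,\lambda]}(\psi(x)) = \psi(\chi_{(-\infty,\lambda]}(x))$ for every $\lambda\in\mathbb{R}$ (whenever these Borel functional calculi are defined, e.g. in von Neumann algebras). In particular, $\psi$ restricted to self-adjoint elements is a spectral order isomorphism. -/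
noncomputable section

namespace Stmt12Aux

section OneSpace
variable {H : Type*} [NormedAddCommGroup H] [InnerProductSpace ℂ H] [CompleteSpace H]

lemma commute_cfc {x b : H →L[ℂ] H} (hx : IsSelfAdjoint x) (hb : Commute b x) (f : ℝ → ℝ) :
    Commute b (cfc f x) := by
  by_cases hf : ContinuousOn f (spectrum ℝ x)
  · rw [cfc_apply f x hx hf]
    suffices h : ∀ g : C(spectrum ℝ x, ℝ), Commute b (cfcHom hx g) from h _
    intro g
    let φ := (cfcHom hx (R := ℝ)).toAlgHom
    let U : Subalgebra ℝ C(spectrum ℝ x, ℝ) := (Subalgebra.centralizer ℝ {b}).comap φ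
    have hmem : ∀ y : C(spectrum ℝ x, ℝ), y ∈ U ↔ b * φ y = φ y * b := by
      intro y
      rw [Subalgebra.mem_comap, Subalgebra.mem_centralizer_iff]
      exact ⟨fun h => h b rfl, by rintro h m rfl; exact h⟩
    have hUc : IsClosed (U : Set C(spectrum ℝ x, ℝ)) := by
      have : (U : Set C(spectrum ℝ x, ℝ)) = φ ⁻¹' {y | b * y = y * b} := by
        ext y; simpa using hmem y
      rw [this]
      exact (isClosed_eq (continuous_mul_left b) (continuous_mul_right b)).preimage
        (cfcHom_isClosedEmbedding hx).continuous
    have hle : polynomialFunctions (spectrum ℝ x) ≤ U := by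
      rw [polynomialFunctions.eq_adjoin_X]
      apply Algebra.adjoin_le
      rintro _ rfl
      rw [SetLike.mem_coe, hmem]
      have hX : (Polynomial.toContinuousMapOnAlgHom (spectrum ℝ x)) Polynomial.X
          = (ContinuousMap.id ℝ).restrict (spectrum ℝ x) := by ext t; simp
      show b * cfcHom hx _ = cfcHom hx _ * b
      rw [hX, cfcHom_id hx]
      exact hb
    have htop : (⊤ : Subalgebra ℝ C(spectrum ℝ x, ℝ)) ≤ U := by
      rw [← polynomialFunctions.topologicalClosure (spectrum ℝ x)]
      exact Subalgebra.topologicalClosure_minimal hle hUc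
    exact (hmem g).mp (htop Algebra.mem_top)
  · rw [cfc_apply_of_not_continuousOn x hf]; exact Commute.zero_right b

lemma sqrt_sq {c : H →L[ℂ] H} (hc : 0 ≤ c) : (cfc Real.sqrt c) * (cfc Real.sqrt c) = c := by
  rw [← cfc_mul _ _ c (by fun_prop) (by fun_prop)]
  have : cfc (fun x => Real.sqrt x * Real.sqrt x) c = cfc (id : ℝ → ℝ) c :=
    cfc_congr (fun t ht => Real.mul_self_sqrt (spectrum_nonneg_of_nonneg hc ht))
  rw [this, cfc_id ℝ c]

lemma mul_nonneg_of_commute {w c : H →L[ℂ] H} (hw : 0 ≤ w) (hc : 0 ≤ c)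
    (h : Commute w c) : 0 ≤ w * c := by
  set r := cfc Real.sqrt c with hr
  have hrsa : IsSelfAdjoint r :=
    IsSelfAdjoint.of_nonneg (cfc_nonneg (fun t _ => Real.sqrt_nonneg t))
  have hcomm : Commute w r := commute_cfc (IsSelfAdjoint.of_nonneg hc) h Real.sqrt
  have : w * c = star r * w * r := by
    rw [← sqrt_sq hc, ← hr, hrsa.star_eq, ← mul_assoc, ← hcomm.eq, mul_assoc]
  rw [this]
  exact star_left_conjugate_nonneg hw r

lemma smul_selfAdjoint (l : ℝ) {T : H →L[ℂ] H} (h : IsSelfAdjoint T) :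
    IsSelfAdjoint (l • T) := by
  have e : l • T = (l : ℂ) • T := by ext v; simp [Complex.coe_smul]
  rw [e, IsSelfAdjoint, star_smul, RCLike.star_def, Complex.conj_ofReal, h.star_eq]

lemma real_smul_nonneg {r : ℝ} (hr : 0 ≤ r) {v : H →L[ℂ] H} (hv : 0 ≤ v) : 0 ≤ r • v := by
  set s : H →L[ℂ] H := Real.sqrt r • 1 with hs
  have hss : IsSelfAdjoint s := smul_selfAdjoint _ (IsSelfAdjoint.one _)
  have : star s * v * s = r • v := by
    rw [hss.star_eq, hs, smul_mul_assoc, one_mul, mul_smul_comm, mul_one, smul_smul,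
      Real.mul_self_sqrt hr]
  rw [← this]
  exact star_left_conjugate_nonneg hv s

lemma comm_of_le_smul {x t : H →L[ℂ] H} (l : ℝ) (hx : IsSelfAdjoint x) (ht : IsSelfAdjoint t)
    (h : x * t ≤ l • t) : x * t = t * x := by
  have h1 : IsSelfAdjoint (x * t) := by
    have : x * t = l • t - (l • t - x * t) := by abel
    rw [this]
    exact (smul_selfAdjoint l ht).sub (IsSelfAdjoint.of_nonneg (sub_nonneg.2 h))
  calc x * t = star (x * t) := h1.star_eq.symm
  _ = t * x := by rw [star_mul, hx.star_eq, ht.star_eq]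

lemma comm_of_smul_le {x t : H →L[ℂ] H} (l : ℝ) (hx : IsSelfAdjoint x) (ht : IsSelfAdjoint t)
    (h : l • t ≤ x * t) : x * t = t * x := by
  have h1 : IsSelfAdjoint (x * t) := by
    have : x * t = (x * t - l • t) + l • t := by abel
    rw [this]
    exact (IsSelfAdjoint.of_nonneg (sub_nonneg.2 h)).add (smul_selfAdjoint l ht)
  calc x * t = star (x * t) := h1.star_eq.symm
  _ = t * x := by rw [star_mul, hx.star_eq, ht.star_eq]

lemma proj_le_proj {x p q : H →L[ℂ] H} (hx : IsSelfAdjoint x)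
    (hp : IsSelfAdjoint p) (hq : IsSelfAdjoint q)
    (hpi : IsIdempotentElem p) (hqi : IsIdempotentElem q) {l m : ℝ} (hlm : l < m)
    (h1 : x * p ≤ l • p) (h2 : m • (1 - q) ≤ x * (1 - q)) : p ≤ q := by
  set q' : H →L[ℂ] H := 1 - q with hq'def
  have hq' : IsSelfAdjoint q' := (IsSelfAdjoint.one (R := H →L[ℂ] H)).sub hq
  have hq'i : q' * q' = q' := (hqi.one_sub).eq
  have hpp : p * p = p := hpi.eq
  have hxp : x * p = p * x := comm_of_le_smul l hx hp h1
  have hxq' : x * q' = q' * x := comm_of_smul_le m hx hq' h2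
  have P2 : ∀ y : H →L[ℂ] H, p * (p * y) = p * y := fun y => by rw [← mul_assoc, hpp]
  have Q2 : ∀ y : H →L[ℂ] H, q' * (q' * y) = q' * y := fun y => by rw [← mul_assoc, hq'i]
  have A1 : ∀ y : H →L[ℂ] H, p * (x * y) = x * (p * y) := fun y => by
    rw [← mul_assoc, ← hxp, mul_assoc]
  have A2 : ∀ y : H →L[ℂ] H, q' * (x * y) = x * (q' * y) := fun y => by
    rw [← mul_assoc, ← hxq', mul_assoc]
  set c : H →L[ℂ] H := p * (q' * p) with hcdef
  have hcsa : IsSelfAdjoint c := by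
    rw [IsSelfAdjoint, hcdef]
    simp [star_mul, hp.star_eq, hq'.star_eq, mul_assoc]
  have hsstar : star (q' * p) = p * q' := by rw [star_mul, hp.star_eq, hq'.star_eq]
  have α : m • c ≤ x * c := by
    have h := star_left_conjugate_le_conjugate h2 (q' * p)
    have hL : star (q' * p) * (m • q') * (q' * p) = m • c := by
      rw [hsstar]; simp [hcdef, mul_assoc, mul_smul_comm, smul_mul_assoc, Q2, P2]
    have hR : star (q' * p) * (x * q') * (q' * p) = x * c := by
      rw [hsstar]; simp [hcdef, mul_assoc, Q2, P2, A1, A2, ← hxp, ← hxq']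
    rwa [hL, hR] at h
  have γ : x * (c * c) ≤ l • (c * c) := by
    have h := star_left_conjugate_le_conjugate h1 c
    have hL : star c * (x * p) * c = x * (c * c) := by
      rw [hcsa.star_eq]; simp [hcdef, mul_assoc, Q2, P2, A1, A2, ← hxp, ← hxq']
    have hR : star c * (l • p) * c = l • (c * c) := by
      rw [hcsa.star_eq]; simp [hcdef, mul_assoc, mul_smul_comm, smul_mul_assoc, Q2, P2]
    rwa [hL, hR] at h
  have hxc : x * c = c * x := by simp [hcdef, mul_assoc, A1, A2, ← hxp]
  have hc0 : (0 : H →L[ℂ] H) ≤ c := by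
    have := star_mul_self_nonneg (q' * p)
    rwa [hsstar, mul_assoc, Q2, ← hcdef] at this
  have hcc : (0 : H →L[ℂ] H) ≤ c * c := by
    have := star_mul_self_nonneg c
    rwa [hcsa.star_eq] at this
  have hxcc : Commute x c := hxc
  have hwcm : Commute (x * c - m • c) c :=
    (hxcc.mul_left (Commute.refl c)).sub_left ((Commute.refl c).smul_left m)
  have hwc : 0 ≤ (x * c - m • c) * c := mul_nonneg_of_commute (sub_nonneg.2 α) hc0 hwcm
  have hexp : (x * c - m • c) * c = x * (c * c) - m • (c * c) := by
    rw [sub_mul, mul_assoc, smul_mul_assoc]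
  have hmc2 : m • (c * c) ≤ x * (c * c) := sub_nonneg.1 (hexp ▸ hwc)
  have hu : 0 ≤ (l - m) • (c * c) := by
    rw [sub_smul]; exact sub_nonneg.2 (hmc2.trans γ)
  have hneg : (0 : H →L[ℂ] H) ≤ -(c * c) := by
    have h3 : -(c * c) = (m - l)⁻¹ • ((l - m) • (c * c)) := by
      rw [smul_smul]
      have : (m - l)⁻¹ * (l - m) = -1 := by
        rw [show l - m = -(m - l) by ring, mul_neg, inv_mul_cancel₀ (by linarith : m - l ≠ 0)]
      rw [this, neg_one_smul]
    rw [h3]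
    exact real_smul_nonneg (inv_nonneg.2 (by linarith)) hu
  have hc2z : c * c = 0 := le_antisymm (by simpa using hneg) hcc
  have hcz : c = 0 := by
    have : star c * c = 0 := by rw [hcsa.star_eq]; exact hc2z
    exact (CStarRing.star_mul_self_eq_zero_iff c).mp this
  have hsz : q' * p = 0 := by
    have : star (q' * p) * (q' * p) = 0 := by
      rw [hsstar]
      calc p * q' * (q' * p) = p * (q' * p) := by rw [mul_assoc, Q2]
      _ = 0 := hcz
    exact (CStarRing.star_mul_self_eq_zero_iff _).mp this
  have hqp : q * p = p := by
    have h' : (1 : H →L[ℂ] H) * p - q * p = 0 := by rw [← sub_mul]; exact hsz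
    rw [one_mul] at h'
    exact (sub_eq_zero.mp h').symm
  have hpq : p * q = p := by
    have : star (q * p) = p * q := by rw [star_mul, hp.star_eq, hq.star_eq]
    rw [← this, hqp, hp.star_eq]
  have hq0 : (0 : H →L[ℂ] H) ≤ q := by
    have := star_mul_self_nonneg q
    rwa [hq.star_eq, hqi.eq] at this
  have hconj : (0 : H →L[ℂ] H) ≤ (1 - p) * q * (1 - p) := by
    have := star_left_conjugate_nonneg hq0 (1 - p)
    rwa [((IsSelfAdjoint.one (R := H →L[ℂ] H)).sub hp).star_eq] at this
  have hexp2 : (1 - p) * q * (1 - p) = q - p := by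
    calc (1 - p) * q * (1 - p) = (q - p * q) * (1 - p) := by rw [sub_mul, one_mul]
    _ = (q - p) * (1 - p) := by rw [hpq]
    _ = (q - q * p) - (p - p * p) := by rw [sub_mul, mul_sub, mul_sub, mul_one, mul_one]
    _ = q - p := by rw [hqp, hpp]; abel
  rw [hexp2] at hconj
  exact sub_nonneg.1 hconj

lemma spectral_family_unique {y : H →L[ℂ] H} (hy : IsSelfAdjoint y) {E F : ℝ → H →L[ℂ] H}
    (hE : IsSpectralFamily y E) (hF : IsSpectralFamily y F) : ∀ l, E l = F l := by
  obtain ⟨hEsa, hEi, hEm, hEg, -, hEc⟩ := hE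
  obtain ⟨hFsa, hFi, hFm, hFg, -, hFc⟩ := hF
  have h1 : ∀ l, E l ≤ F l := by
    intro l
    refine (hFg l).2 ?_
    rintro - ⟨m, hm, rfl⟩
    exact proj_le_proj hy (hEsa l) (hFsa m) (hEi l) (hFi m) hm (hEc l).1 (hFc m).2
  have h2 : ∀ l, F l ≤ E l := by
    intro l
    refine (hEg l).2 ?_
    rintro - ⟨m, hm, rfl⟩
    exact proj_le_proj hy (hFsa l) (hEsa m) (hFi l) (hEi m) hm (hFc l).1 (hEc m).2
  exact fun l => le_antisymm (h1 l) (h2 l)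

lemma real_smul_eq (l : ℝ) (T : H →L[ℂ] H) : l • T = (l : ℂ) • T := by
  ext v; simp [Complex.coe_smul]

end OneSpace

lemma half_cancel {M : Type*} [AddCommGroup M] [Module ℝ M] {u v : M} (h : u + u = v + v) :
    u = v := by
  have h2 : (2 : ℝ) • u = (2 : ℝ) • v := by rw [two_smul, two_smul]; exact h
  calc u = (2 : ℝ)⁻¹ • ((2 : ℝ) • u) := by rw [smul_smul]; norm_num
  _ = (2 : ℝ)⁻¹ • ((2 : ℝ) • v) := by rw [h2]
  _ = v := by rw [smul_smul]; norm_num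

section TwoSpaces
variable {H K : Type*} [NormedAddCommGroup H] [InnerProductSpace ℂ H] [CompleteSpace H]
  [NormedAddCommGroup K] [InnerProductSpace ℂ K] [CompleteSpace K]
  (ψ : (H →L[ℂ] H) →ₗ[ℂ] (K →L[ℂ] K))

lemma jordan (hsq : ∀ x, ψ (x * x) = ψ x * ψ x) (a b : H →L[ℂ] H) :
    ψ (a * b + b * a) = ψ a * ψ b + ψ b * ψ a := by
  have h := hsq (a + b)
  have e1 : (a + b) * (a + b) = a * a + (a * b + b * a) + b * b := by noncomm_ring
  rw [e1] at h
  rw [map_add ψ (a * a + (a * b + b * a)) (b * b), map_add ψ (a * a) (a * b + b * a),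
    map_add ψ a b, hsq a, hsq b] at h
  have e2 : (ψ a + ψ b) * (ψ a + ψ b)
      = ψ a * ψ a + (ψ a * ψ b + ψ b * ψ a) + ψ b * ψ b := by noncomm_ring
  rw [e2] at h
  exact add_left_cancel (add_right_cancel h)

lemma jone (hsq : ∀ x, ψ (x * x) = ψ x * ψ x) (hsurj : Function.Surjective ψ) : ψ 1 = 1 := by
  set e := ψ 1 with he
  have hee : e * e = e := by rw [he, ← hsq]; simp
  have hb : ∀ b : K →L[ℂ] K, b + b = b * e + e * b := by
    intro b; obtain ⟨a, rfl⟩ := hsurj b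
    have h := jordan ψ hsq a 1
    rw [mul_one, one_mul, map_add] at h
    exact h
  have hbe : ∀ b : K →L[ℂ] K, e * b = b * e := by
    intro b
    have h := hb b
    have h1 := congrArg (fun z => e * z) h
    have h2 := congrArg (fun z => z * e) h
    simp only [mul_add, add_mul, ← mul_assoc, hee] at h1 h2
    -- h1 : e * b + e * b = e * b * e + e * b
    -- h2 : b * e + b * e = b * e + e * b * e
    have hA : e * b = e * b * e := by
      have := h1
      rw [add_comm (e * b * e) (e * b)] at this
      exact add_left_cancel this
    rw [mul_assoc b e e, hee] at h2
    have hB : b * e = e * b * e := add_left_cancel h2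
    rw [hA, hB]
  have h1 := hb 1
  rw [← hbe 1] at h1
  have h2 := half_cancel h1
  rw [mul_one] at h2
  exact h2.symm

lemma jmono (hsq : ∀ x, ψ (x * x) = ψ x * ψ x) (hstar : ∀ x, ψ (star x) = star (ψ x))
    {a b : H →L[ℂ] H} (h : a ≤ b) : ψ a ≤ ψ b := by
  have h0 : (0 : H →L[ℂ] H) ≤ b - a := sub_nonneg.2 h
  set r := cfc Real.sqrt (b - a) with hr
  have hrsa : IsSelfAdjoint r :=
    IsSelfAdjoint.of_nonneg (cfc_nonneg (fun t _ => Real.sqrt_nonneg t))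
  have key : ψ b - ψ a = star (ψ r) * ψ r := by
    calc ψ b - ψ a = ψ (b - a) := (map_sub ψ b a).symm
    _ = ψ r * ψ r := by rw [← sqrt_sq h0, ← hr, hsq]
    _ = star (ψ r) * ψ r := by rw [← hstar r, hrsa.star_eq]
  refine sub_nonneg.1 ?_
  rw [key]
  exact star_mul_self_nonneg (ψ r)

lemma jmul_idem (hsq : ∀ x, ψ (x * x) = ψ x * ψ x)
    {x p : H →L[ℂ] H} (hpp : p * p = p) (hcomm : x * p = p * x) :
    ψ (x * p) = ψ x * ψ p ∧ ψ x * ψ p = ψ p * ψ x := by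
  set X := ψ x with hX
  set P := ψ p with hP
  set Z := ψ (x * p) with hZ
  have hPP : P * P = P := by rw [hP, ← hsq, hpp]
  have hi : Z + Z = X * P + P * X := by
    have h := jordan ψ hsq x p
    rw [← hcomm, map_add] at h
    exact h
  have hii : Z + Z = P * Z + Z * P := by
    have h := jordan ψ hsq p (x * p)
    have e : p * (x * p) + x * p * p = x * p + x * p := by
      have e1 : p * (x * p) = x * p := by
        rw [← mul_assoc, ← hcomm, mul_assoc, hpp]
      have e2 : x * p * p = x * p := by rw [mul_assoc, hpp]
      rw [e1, e2]
    rw [e, map_add] at h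
    exact h
  have hPZ : P * Z = P * Z * P := by
    have h1 := congrArg (fun z => P * z) hii
    simp only [mul_add, ← mul_assoc, hPP] at h1
    exact add_left_cancel h1
  have hZP : Z * P = P * Z * P := by
    have h2 := congrArg (fun z => z * P) hii
    simp only [add_mul, mul_assoc, hPP] at h2
    rw [← mul_assoc P Z P, add_comm (P * Z * P) (Z * P)] at h2
    exact add_left_cancel h2
  have hPZc : P * Z = Z * P := hPZ.trans hZP.symm
  have hZ1 : Z = P * Z := by
    apply half_cancel
    rw [hii, hPZc]
  have hXP : P * X = X * P := by
    have h3 := congrArg (fun z => P * z) hi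
    have h4 := congrArg (fun z => z * P) hi
    simp only [mul_add, add_mul, ← mul_assoc, hPP] at h3 h4
    -- h3 : P * Z + P * Z = P * X * P + P * X
    -- h4 : Z * P + Z * P = X * P + P * X * P
    rw [← hPZc, ← hZ1] at h4
    rw [← hZ1] at h3
    have h5 := h3.symm.trans h4
    rw [mul_assoc X P P, hPP, add_comm (X * P) (P * X * P)] at h5
    exact add_left_cancel h5
  have hfin : Z = X * P := by
    apply half_cancel
    rw [hi, hXP]
  exact ⟨hfin, hXP.symm⟩

end TwoSpaces
end Stmt12Aux

variable {H K : Type*} [NormedAddCommGroup H] [InnerProductSpace ℂ H] [CompleteSpace H]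
  [NormedAddCommGroup K] [InnerProductSpace ℂ K] [CompleteSpace K]

open Stmt12Aux in
/-- A Jordan *-isomorphism intertwines spectral projections; in particular it is a
spectral order isomorphism on self-adjoint elements. -/
theorem stmt12 (ψ : (H →L[ℂ] H) →ₗ[ℂ] (K →L[ℂ] K)) (hbij : Function.Bijective ψ)
    (hsq : ∀ x, ψ (x * x) = ψ x * ψ x) (hstar : ∀ x, ψ (star x) = star (ψ x)) :
    (∀ x : H →L[ℂ] H, IsSelfAdjoint x →
      ∀ (E : ℝ → (H →L[ℂ] H)) (F : ℝ → (K →L[ℂ] K)),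
        IsSpectralFamily x E → IsSpectralFamily (ψ x) F → ∀ l, F l = ψ (E l)) ∧
    (∀ x y : H →L[ℂ] H, IsSelfAdjoint x → IsSelfAdjoint y →
      ∀ (Ex Ey : ℝ → (H →L[ℂ] H)) (Fx Fy : ℝ → (K →L[ℂ] K)),
        IsSpectralFamily x Ex → IsSpectralFamily y Ey →
        IsSpectralFamily (ψ x) Fx → IsSpectralFamily (ψ y) Fy →
        ((∀ l, Ey l ≤ Ex l) ↔ (∀ l, Fy l ≤ Fx l))) := by
  have hsurj := hbij.2
  have hone : ψ 1 = 1 := jone ψ hsq hsurj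
  set Ψ := LinearEquiv.ofBijective ψ hbij with hPsi
  have happ : ∀ a, Ψ a = ψ a := fun a => rfl
  have hsymm : ∀ a, Ψ.symm (ψ a) = a := fun a => by
    rw [← happ]; exact Ψ.symm_apply_apply a
  have happ' : ∀ z, ψ (Ψ.symm z) = z := fun z => by rw [← happ]; exact Ψ.apply_symm_apply z
  have hsq' : ∀ z, Ψ.symm.toLinearMap (z * z) = Ψ.symm.toLinearMap z * Ψ.symm.toLinearMap z := by
    intro z; apply hbij.1
    show ψ (Ψ.symm (z * z)) = ψ (Ψ.symm z * Ψ.symm z)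
    rw [happ', hsq, happ']
  have hstar' : ∀ z, Ψ.symm.toLinearMap (star z) = star (Ψ.symm.toLinearMap z) := by
    intro z; apply hbij.1
    show ψ (Ψ.symm (star z)) = ψ (star (Ψ.symm z))
    rw [happ', hstar, happ']
  have hmono : ∀ a b : H →L[ℂ] H, a ≤ b → ψ a ≤ ψ b := fun a b h => jmono ψ hsq hstar h
  have hmono' : ∀ a b : K →L[ℂ] K, a ≤ b → Ψ.symm a ≤ Ψ.symm b := fun a b h =>
    jmono Ψ.symm.toLinearMap hsq' hstar' h
  let iso : (H →L[ℂ] H) ≃o (K →L[ℂ] K) :=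
    { toEquiv := Ψ.toEquiv
      map_rel_iff' := by
        intro a b
        constructor
        · intro h
          have h2 := hmono' _ _ h
          simpa using h2
        · intro h; exact hmono a b h }
  have hiso : ∀ a, iso a = ψ a := fun a => rfl
  have hsmulA : ∀ (l : ℝ) (T : H →L[ℂ] H), ψ (l • T) = l • ψ T := by
    intro l T
    rw [real_smul_eq l T, map_smul, ← real_smul_eq]
  have part1 : ∀ x : H →L[ℂ] H, IsSelfAdjoint x →
      ∀ (E : ℝ → (H →L[ℂ] H)) (F : ℝ → (K →L[ℂ] K)),
        IsSpectralFamily x E → IsSpectralFamily (ψ x) F → ∀ l, F l = ψ (E l) := by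
    intro x hx E F hE hF
    have hpsix : IsSelfAdjoint (ψ x) := by
      show star (ψ x) = ψ x
      rw [← hstar x, hx.star_eq]
    obtain ⟨hEsa, hEi, hEm, hEg, ⟨a, ha, hbl, hbu⟩, hEc⟩ := hE
    have hE' : IsSpectralFamily (ψ x) (fun m => ψ (E m)) := by
      refine ⟨fun m => ?_, fun m => ?_, fun m₁ m₂ h => hmono _ _ (hEm h), fun m => ?_,
        ⟨a, ha, fun m hm => ?_, fun m hm => ?_⟩, fun m => ⟨?_, ?_⟩⟩
      · show star (ψ (E m)) = ψ (E m)
        rw [← hstar, (hEsa m).star_eq]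
      · show ψ (E m) * ψ (E m) = ψ (E m)
        rw [← hsq, (hEi m).eq]
      · have h0 : IsGLB (iso '' (E '' Set.Ioi m)) (iso (E m)) :=
          (OrderIso.isGLB_image' (f := iso)).mpr (hEg m)
        rw [Set.image_image] at h0
        exact h0
      · show ψ (E m) = 0
        rw [hbl m hm, map_zero]
      · show ψ (E m) = 1
        rw [hbu m hm, hone]
      · have hcm : x * E m = E m * x := comm_of_le_smul m hx (hEsa m) (hEc m).1
        have hmul := (jmul_idem ψ hsq (hEi m).eq hcm).1
        have h2 := hmono _ _ (hEc m).1
        rwa [hmul, hsmulA] at h2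
      · have hcm : x * E m = E m * x := comm_of_le_smul m hx (hEsa m) (hEc m).1
        have hcm' : x * (1 - E m) = (1 - E m) * x := by
          rw [mul_one_sub, one_sub_mul, hcm]
        have hmul := (jmul_idem ψ hsq ((hEi m).one_sub).eq hcm').1
        have h2 := hmono _ _ (hEc m).2
        rwa [hmul, hsmulA, map_sub, hone] at h2
    exact fun l => spectral_family_unique hpsix hF hE' l
  refine ⟨part1, ?_⟩
  intro x y hx hy Ex Ey Fx Fy hEx hEy hFx hFy
  have e1 := part1 x hx Ex Fx hEx hFx
  have e2 := part1 y hy Ey Fy hEy hFy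
  constructor
  · intro h l; rw [e1 l, e2 l]; exact hmono _ _ (h l)
  · intro h l
    have h2 := h l
    rw [e1 l, e2 l] at h2
    have h3 := hmono' _ _ h2
    rwa [hsymm, hsymm] at h3
end
end

section
/- Let $p, q$ be projections in a von Neumann algebra and let $0 \le \alpha \le \beta$ be real numbers. Then the spectral-order supremum of $\alpha p$ and $\beta q$ is $\alpha p \vee \beta q = \alpha(p \vee q - q) + \beta q$, where $p \vee q$ denotes the supremum in the projection lattice. -/
/-!
Each of `α p`, `β q` and `y = α (r - q) + β q` is a real combination `∑ μ i • u i` of mutually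
orthogonal projections summing to `1` (namely `1 - p, p`; `1 - q, q`; `1 - r, r - q, q`), so its
spectral family is the step function `E l = ∑_{μ i ≤ l} u i`. This is the only spectral family:
a projection `e` satisfying the defining inequalities at a point `l` outside the spectrum commutes
with `x`, hence with every polynomial in `x`, hence with `E l`; conjugating the inequalities for
`e` and for `E l` across the spectral gap at `l` gives `e (1 - E l) = 0 = E l (1 - e)`, and right
continuity handles the points of the spectrum. The theorem thus reduces to the pointwise identity
`E^y_l = E^{αp}_l ⊓ E^{βq}_l` in the projection lattice, whose only nontrivial case
`0 ≤ l < α` is `1 - (p ⊔ q) = (1 - p) ⊓ (1 - q)`.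
-/

noncomputable section

open Filter Topology

theorem eventually_nhdsGT_le_iff {α : Type*} [LinearOrder α] [TopologicalSpace α] [OrderTopology α]
    (a l : α) : ∀ᶠ t in 𝓝[>] l, a ≤ t ↔ a ≤ l := by
  rcases le_or_gt a l with hal | hla
  · filter_upwards [self_mem_nhdsWithin] with t (ht : l < t)
    simp [hal, hal.trans ht.le]
  · filter_upwards [Ioo_mem_nhdsGT hla] with t ht
    simp [hla.not_ge, ht.2.not_ge]

theorem eventually_nhdsLT_le_iff {α : Type*} [LinearOrder α] [TopologicalSpace α] [OrderTopology α]
    (a l : α) : ∀ᶠ t in 𝓝[<] l, a ≤ t ↔ a < l := by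
  rcases lt_or_ge a l with hal | hla
  · filter_upwards [Ioo_mem_nhdsLT hal] with t ht
    simp [hal, ht.1.le]
  · filter_upwards [self_mem_nhdsWithin] with t (ht : t < l)
    simp [hla.not_gt, (ht.trans_le hla).not_ge]

theorem Monotone.isGLB_image_Ioi_of_eventually_eq {α β : Type*} [LinearOrder α]
    [TopologicalSpace α] [OrderTopology α] [DenselyOrdered α] [NoMaxOrder α] [Preorder β]
    {f : α → β} (hf : Monotone f) {a : α} {b : β} (h : ∀ᶠ t in 𝓝[>] a, f t = b) :
    IsGLB (f '' Set.Ioi a) b := by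
  refine ⟨?_, fun c hc => ?_⟩
  · rintro _ ⟨s, hs, rfl⟩
    obtain ⟨t, hft, hts⟩ := (h.and (Ioo_mem_nhdsGT hs)).exists
    exact hft ▸ hf hts.2.le
  · obtain ⟨t, hft, hat⟩ := (h.and self_mem_nhdsWithin).exists
    exact hft ▸ hc ⟨t, hat, rfl⟩

theorem IsSpectralFamily.isStarProjection {A : Type*} [Ring A] [StarRing A] [PartialOrder A]
    [Module ℝ A] {x : A} {E : ℝ → A} (hE : IsSpectralFamily x E) (l : ℝ) :
    IsStarProjection (E l) :=
  ⟨hE.2.1 l, hE.1 l⟩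

section StarOrderedAlgebra

variable {A : Type*} [Ring A] [StarRing A] [PartialOrder A] [StarOrderedRing A] [Algebra ℝ A]
  [StarModule ℝ A]

theorem commute_of_mul_le_smul {x e : A} (hx : IsSelfAdjoint x) (he : IsSelfAdjoint e) {l : ℝ}
    (h : x * e ≤ l • e) : Commute x e := by
  have hsa : IsSelfAdjoint (x * e) := by
    simpa using ((IsSelfAdjoint.all l).smul he).sub (IsSelfAdjoint.of_nonneg (sub_nonneg.mpr h))
  simpa [Commute, SemiconjBy, hx.star_eq, he.star_eq] using hsa.star_eq.symm

/-- Conjugating `x e ≤ l • e` by `c` and `m • c ≤ x c` by `e` gives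
`m • e c ≤ x e c ≤ l • e c`. -/
theorem IsStarProjection.mul_eq_zero_of_spectral_gap {x e c : A} (he : IsStarProjection e)
    (hc : IsStarProjection c) (hxe : Commute x e) (hxc : Commute x c) (hec : Commute e c)
    {l m : ℝ} (hle : x * e ≤ l • e) (hmc : m • c ≤ x * c) (hlm : l < m) : e * c = 0 := by
  have hupper : x * (e * c) ≤ l • (e * c) := by
    have hx : c * (x * e) * c = x * (e * c) := by
      rw [← mul_assoc, ← hxc.eq, mul_assoc x, mul_assoc x, ← hec.eq, mul_assoc,
        hc.isIdempotentElem.eq]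
    have hl : c * (l • e) * c = l • (e * c) := by
      rw [mul_smul_comm, smul_mul_assoc, ← hec.eq, mul_assoc, hc.isIdempotentElem.eq]
    rw [← hx, ← hl]
    exact hc.isSelfAdjoint.conjugate_le_conjugate hle
  have hlower : m • (e * c) ≤ x * (e * c) := by
    have hx : e * (x * c) * e = x * (e * c) := by
      rw [← mul_assoc, ← hxe.eq, mul_assoc x, mul_assoc x, hec.eq, mul_assoc,
        he.isIdempotentElem.eq]
    have hm : e * (m • c) * e = m • (e * c) := by
      rw [mul_smul_comm, smul_mul_assoc, mul_assoc, ← hec.eq, ← mul_assoc,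
        he.isIdempotentElem.eq]
    rw [← hx, ← hm]
    exact he.isSelfAdjoint.conjugate_le_conjugate hmc
  have h0 : (m - l) • (e * c) = 0 :=
    le_antisymm (by simpa [sub_smul] using hlower.trans hupper)
      (smul_nonneg (sub_nonneg.mpr hlm.le) (he.mul hc hec).nonneg)
  exact (smul_eq_zero.mp h0).resolve_left (sub_ne_zero.mpr hlm.ne')

end StarOrderedAlgebra

section SpectralDecomposition

variable {A : Type*} [Ring A] [StarRing A] [Algebra ℝ A] {ι : Type*} [Fintype ι]

structure IsResolutionOfIdentity (u : ι → A) : Prop where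
  isStarProjection : ∀ i, IsStarProjection (u i)
  mul_eq_zero : Pairwise fun i j => u i * u j = 0
  sum_eq_one : ∑ i, u i = 1

namespace IsResolutionOfIdentity

variable {u : ι → A} (h : IsResolutionOfIdentity u) (μ : ι → ℝ)
include h

/-- The functional calculus `g ↦ g(x)` of `x = ∑ i, μ i • u i`. -/
def calculus : (ℝ → ℝ) →ₐ[ℝ] A where
  toFun g := ∑ i, g (μ i) • u i
  map_one' := by simpa using h.sum_eq_one
  map_mul' g g' := by
    simp only [Finset.sum_mul_sum, smul_mul_smul_comm, Pi.mul_apply]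
    refine Finset.sum_congr rfl fun i _ => ?_
    rw [Finset.sum_eq_single i (fun j _ hji => by rw [h.mul_eq_zero hji.symm, smul_zero])
      (by simp), (h.isStarProjection i).isIdempotentElem.eq]
  map_zero' := by simp
  map_add' g g' := by simp [add_smul, Finset.sum_add_distrib]
  commutes' c := by
    simp [← Finset.smul_sum, h.sum_eq_one, Algebra.algebraMap_eq_smul_one]

def spectralFamily (l : ℝ) : A := h.calculus μ ((Set.Iic l).indicator 1)

theorem calculus_apply (g : ℝ → ℝ) : h.calculus μ g = ∑ i, g (μ i) • u i := rfl

theorem calculus_congr {g g' : ℝ → ℝ} (hg : ∀ i, g (μ i) = g' (μ i)) :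
    h.calculus μ g = h.calculus μ g' := by
  simp only [calculus_apply, hg]

theorem spectralFamily_eq_of_forall_le_iff {l t : ℝ} (ht : ∀ i, μ i ≤ t ↔ μ i ≤ l) :
    h.spectralFamily μ t = h.spectralFamily μ l :=
  h.calculus_congr μ fun i => by simp only [Set.indicator_apply, Set.mem_Iic, ht i]

theorem exists_spectralFamily_eq_zero_and_eq_one : ∃ a : ℝ, 0 < a ∧
    (∀ l, l < -a → h.spectralFamily μ l = 0) ∧ (∀ l, a < l → h.spectralFamily μ l = 1) := by
  have hμ (i : ι) : |μ i| < 1 + ∑ j, |μ j| := by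
    linarith [Finset.single_le_sum (fun j _ => abs_nonneg (μ j)) (Finset.mem_univ i)]
  refine ⟨1 + ∑ i, |μ i|, by positivity, fun l hl => ?_, fun l hl => ?_⟩
  · rw [spectralFamily, ← map_zero (h.calculus μ)]
    exact h.calculus_congr μ fun i => Set.indicator_of_notMem
      (by simpa using hl.trans (abs_lt.mp (hμ i)).1) _
  · rw [spectralFamily, ← map_one (h.calculus μ)]
    exact h.calculus_congr μ fun i => Set.indicator_of_mem
      (by simpa using ((le_abs_self _).trans_lt (hμ i)).trans hl |>.le) _

/-- On the finite spectrum `Set.range μ`, `g` agrees with a (Lagrange) polynomial. -/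
theorem commute_calculus {e : A} (he : Commute (h.calculus μ id) e) (g : ℝ → ℝ) :
    Commute (h.calculus μ g) e := by
  classical
  set p := Lagrange.interpolate (Finset.univ.image μ) id g
  have hp : h.calculus μ g = Polynomial.aeval (h.calculus μ id) p := by
    rw [Polynomial.aeval_algHom_apply]
    refine h.calculus_congr μ fun i => ?_
    rw [Polynomial.aeval_fn_apply, id, Polynomial.coe_aeval_eq_eval]
    exact (Lagrange.eval_interpolate_at_node g (Set.injOn_id _) (Finset.mem_image_of_mem μ
      (Finset.mem_univ i))).symm
  rw [hp, Polynomial.aeval_eq_smeval]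
  exact Polynomial.smeval_commute_left ℝ p he

variable [StarModule ℝ A]

theorem isSelfAdjoint_calculus (g : ℝ → ℝ) : IsSelfAdjoint (h.calculus μ g) :=
  isSelfAdjoint_sum _ fun i _ => (IsSelfAdjoint.all _).smul (h.isStarProjection i).isSelfAdjoint

theorem isStarProjection_spectralFamily (l : ℝ) : IsStarProjection (h.spectralFamily μ l) where
  isIdempotentElem := by
    rw [IsIdempotentElem, spectralFamily, ← map_mul]
    exact h.calculus_congr μ fun i => by simp [Set.indicator_apply]
  isSelfAdjoint := h.isSelfAdjoint_calculus μ _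

variable [PartialOrder A] [StarOrderedRing A]

theorem calculus_nonneg {g : ℝ → ℝ} (hg : ∀ i, 0 ≤ g (μ i)) : 0 ≤ h.calculus μ g :=
  Finset.sum_nonneg fun i _ => smul_nonneg (hg i) (h.isStarProjection i).nonneg

theorem calculus_mono {g g' : ℝ → ℝ} (hg : ∀ i, g (μ i) ≤ g' (μ i)) :
    h.calculus μ g ≤ h.calculus μ g' := by
  rw [← sub_nonneg, ← map_sub]
  exact h.calculus_nonneg μ fun i => sub_nonneg.mpr (hg i)

theorem monotone_spectralFamily : Monotone (h.spectralFamily μ) := fun _ _ hst =>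
  h.calculus_mono μ fun _ => Set.indicator_le_indicator_of_subset (Set.Iic_subset_Iic.mpr hst)
    (fun _ => zero_le_one) _

theorem calculus_id_mul_spectralFamily_le {l m : ℝ} (hm : ∀ i, μ i ≤ l → μ i ≤ m) :
    h.calculus μ id * h.spectralFamily μ l ≤ m • h.spectralFamily μ l := by
  rw [spectralFamily, ← map_mul, ← map_smul]
  exact h.calculus_mono μ fun i => by
    by_cases hi : μ i ≤ l <;> simp [hi, hm i]

theorem smul_one_sub_spectralFamily_le {l m : ℝ} (hm : ∀ i, l < μ i → m ≤ μ i) :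
    m • (1 - h.spectralFamily μ l) ≤ h.calculus μ id * (1 - h.spectralFamily μ l) := by
  rw [spectralFamily, ← map_one (h.calculus μ), ← map_sub, ← map_mul, ← map_smul]
  exact h.calculus_mono μ fun i => by
    by_cases hi : μ i ≤ l
    · simp [hi]
    · simp [hi, hm i (not_le.mp hi)]

theorem isSpectralFamily : IsSpectralFamily (h.calculus μ id) (h.spectralFamily μ) :=
  ⟨fun l => (h.isStarProjection_spectralFamily μ l).isSelfAdjoint,
    fun l => (h.isStarProjection_spectralFamily μ l).isIdempotentElem,
    h.monotone_spectralFamily μ,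
    fun l => (h.monotone_spectralFamily μ).isGLB_image_Ioi_of_eventually_eq
      ((eventually_all.mpr fun i => eventually_nhdsGT_le_iff (μ i) l).mono fun _ =>
        h.spectralFamily_eq_of_forall_le_iff μ),
    h.exists_spectralFamily_eq_zero_and_eq_one μ,
    fun _ => ⟨h.calculus_id_mul_spectralFamily_le μ fun _ => id,
      h.smul_one_sub_spectralFamily_le μ fun _ => le_of_lt⟩⟩

theorem eq_spectralFamily_of_notMem_range {l : ℝ} (hl : l ∉ Set.range μ) {e : A}
    (he : IsStarProjection e) (hle : h.calculus μ id * e ≤ l • e)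
    (hge : l • (1 - e) ≤ h.calculus μ id * (1 - e)) : e = h.spectralFamily μ l := by
  set x := h.calculus μ id
  set f := h.spectralFamily μ l
  have hf : IsStarProjection f := h.isStarProjection_spectralFamily μ l
  have hxe : Commute x e :=
    commute_of_mul_le_smul (h.isSelfAdjoint_calculus μ id) he.isSelfAdjoint hle
  have hfe : Commute f e := h.commute_calculus μ hxe _
  have hxf : Commute x f := (Commute.all _ _).map (h.calculus μ)
  obtain ⟨m, hm_iff, hml⟩ := ((eventually_all.mpr fun i => eventually_nhdsLT_le_iff (μ i) l).and
    self_mem_nhdsWithin).exists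
  obtain ⟨m', hm'_iff, hlm'⟩ := ((eventually_all.mpr fun i => eventually_nhdsGT_le_iff (μ i) l).and
    self_mem_nhdsWithin).exists
  have hm_ge (i : ι) (hi : μ i ≤ l) : μ i ≤ m := (hm_iff i).mpr (hi.lt_of_ne fun h' => hl ⟨i, h'⟩)
  have hm'_le (i : ι) (hi : l < μ i) : m' ≤ μ i :=
    (not_le.mp fun h' => hi.not_ge ((hm'_iff i).mp h')).le
  have hef : e * (1 - f) = 0 :=
    he.mul_eq_zero_of_spectral_gap hf.one_sub hxe ((Commute.one_right x).sub_right hxf)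
      ((Commute.one_right e).sub_right hfe.symm) hle (h.smul_one_sub_spectralFamily_le μ hm'_le)
      hlm'
  have hfe' : f * (1 - e) = 0 :=
    hf.mul_eq_zero_of_spectral_gap he.one_sub hxf ((Commute.one_right x).sub_right hxe)
      ((Commute.one_right f).sub_right hfe) (h.calculus_id_mul_spectralFamily_le μ hm_ge) hge hml
  rw [mul_sub, mul_one, sub_eq_zero] at hef hfe'
  calc e = e * f := hef
    _ = f * e := hfe.eq.symm
    _ = f := hfe'.symm

theorem eq_spectralFamily {E : ℝ → A} (hE : IsSpectralFamily (h.calculus μ id) E) :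
    E = h.spectralFamily μ := by
  obtain ⟨hsa, hidem, hmono, hglb, -, hineq⟩ := hE
  funext l
  refine (hglb l).unique (hmono.isGLB_image_Ioi_of_eventually_eq ?_)
  filter_upwards [self_mem_nhdsWithin,
    eventually_all.mpr fun i => eventually_nhdsGT_le_iff (μ i) l] with t (hlt : l < t) ht
  have ht_notMem : t ∉ Set.range μ := by
    rintro ⟨i, rfl⟩
    exact hlt.not_ge ((ht i).mp le_rfl)
  rw [h.eq_spectralFamily_of_notMem_range μ ht_notMem ⟨hidem t, hsa t⟩ (hineq t).1 (hineq t).2]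
  exact h.spectralFamily_eq_of_forall_le_iff μ ht

theorem specLE_of_forall_le {y : A}
    (H : ∀ F, IsSpectralFamily y F → ∀ l, F l ≤ h.spectralFamily μ l) :
    SpecLE (h.calculus μ id) y := fun _ F hE hF l =>
  h.eq_spectralFamily μ hE ▸ H F hF l

end IsResolutionOfIdentity

variable [StarModule ℝ A] [PartialOrder A] [StarOrderedRing A]

theorem SpecLE.le_spectralFamily {u : ι → A} {h : IsResolutionOfIdentity u} {μ : ι → ℝ} {y : A}
    (hxy : SpecLE (h.calculus μ id) y) {F : ℝ → A} (hF : IsSpectralFamily y F) (l : ℝ) :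
    F l ≤ h.spectralFamily μ l :=
  hxy _ F (h.isSpectralFamily μ) hF l

end SpectralDecomposition

section TwoProjections

variable {A : Type*} [Ring A] [StarRing A]

theorem IsStarProjection.isResolutionOfIdentity_pair {p : A} (hp : IsStarProjection p) :
    IsResolutionOfIdentity ![1 - p, p] where
  isStarProjection := Fin.forall_fin_two.mpr ⟨hp.one_sub, hp⟩
  mul_eq_zero i j hij := by
    fin_cases i <;> fin_cases j <;> simp_all [hp.one_sub_mul_self, hp.mul_one_sub_self]
  sum_eq_one := by simp

theorem IsStarProjection.isResolutionOfIdentity_triple {q r : A} (hq : IsStarProjection q)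
    (hr : IsStarProjection r) (hrq : r * q = q) : IsResolutionOfIdentity ![1 - r, r - q, q] where
  isStarProjection i := by
    fin_cases i
    exacts [hr.one_sub, hq.sub_of_mul_eq_right hr hrq, hq]
  mul_eq_zero i j hij := by
    have hqr : q * r = q := by
      simpa [hq.isSelfAdjoint.star_eq, hr.isSelfAdjoint.star_eq] using congr(star $hrq)
    fin_cases i <;> fin_cases j <;>
      simp_all [mul_sub, sub_mul, hq.isIdempotentElem.eq, hr.isIdempotentElem.eq]
  sum_eq_one := by simp [Fin.sum_univ_three]

variable [Algebra ℝ A]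

theorem IsStarProjection.calculus_pair {p : A} (hp : IsStarProjection p) (a : ℝ) :
    hp.isResolutionOfIdentity_pair.calculus ![0, a] id = a • p := by
  simp [IsResolutionOfIdentity.calculus_apply]

theorem IsStarProjection.calculus_triple {q r : A} (hq : IsStarProjection q)
    (hr : IsStarProjection r) (hrq : r * q = q) (a b : ℝ) :
    (hq.isResolutionOfIdentity_triple hr hrq).calculus ![0, a, b] id = a • (r - q) + b • q := by
  simp [IsResolutionOfIdentity.calculus_apply, Fin.sum_univ_three]

variable [PartialOrder A] [StarOrderedRing A]

theorem IsStarProjection.isGreatest_spectralFamily_triple {p q r : A} (hp : IsStarProjection p)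
    (hq : IsStarProjection q) (hr : IsStarProjection r) (hrq : r * q = q) (hpr : p ≤ r)
    (hrmin : ∀ s, IsStarProjection s → p ≤ s → q ≤ s → r ≤ s) {α β : ℝ} (hα : 0 ≤ α)
    (hαβ : α ≤ β) (l : ℝ) :
    IsGreatest {g | IsStarProjection g ∧
      g ≤ hp.isResolutionOfIdentity_pair.spectralFamily ![0, α] l ∧
      g ≤ hq.isResolutionOfIdentity_pair.spectralFamily ![0, β] l}
      ((hq.isResolutionOfIdentity_triple hr hrq).spectralFamily ![0, α, β] l) := by
  simp only [IsResolutionOfIdentity.spectralFamily, IsResolutionOfIdentity.calculus_apply,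
    Set.indicator_apply, Set.mem_Iic, Pi.one_apply, ite_smul, one_smul, zero_smul,
    Fin.sum_univ_two, Fin.sum_univ_three, Matrix.cons_val_zero, Matrix.cons_val_one,
    Matrix.cons_val]
  have key {a b : A} (hb : IsStarProjection b) (hba : b ≤ a) :
      IsGreatest {g | IsStarProjection g ∧ g ≤ a ∧ g ≤ b} b :=
    ⟨⟨hb, hba, le_rfl⟩, fun _ hg => hg.2.2⟩
  rcases lt_or_ge l 0 with h0 | h0
  · simpa [h0.not_ge, (h0.trans_le hα).not_ge, (h0.trans_le (hα.trans hαβ)).not_ge] using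
      key (.zero _) le_rfl
  rcases lt_or_ge l α with hlα | hαl
  · have hqr : q ≤ r := sub_nonneg.mp (hq.sub_of_mul_eq_right hr hrq).nonneg
    simp only [h0, hlα.not_ge, (hlα.trans_le hαβ).not_ge, if_true, if_false, add_zero]
    refine ⟨⟨hr.one_sub, sub_le_sub_left hpr 1, sub_le_sub_left hqr 1⟩,
      fun g ⟨hg, hgp, hgq⟩ => ?_⟩
    exact le_sub_comm.mp (hrmin _ hg.one_sub (le_sub_comm.mp hgp) (le_sub_comm.mp hgq))
  rcases lt_or_ge l β with hlβ | hβl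
  · simpa [h0, hαl, hlβ.not_ge] using key hq.one_sub hq.one_sub.le_one
  · simpa [h0, hαl, hβl] using key (.one _) le_rfl

end TwoProjections

variable {H : Type*} [NormedAddCommGroup H] [InnerProductSpace ℂ H] [CompleteSpace H]

/-- For projections `p, q` and `0 ≤ α ≤ β`, the spectral order supremum of `α p` and
`β q` is `α (p ∨ q - q) + β q`, where `r = p ∨ q` is the supremum in the projection
lattice. -/
theorem stmt14 (p q r : H →L[ℂ] H)
    (hp : IsSelfAdjoint p) (hp2 : IsIdempotentElem p)
    (hq : IsSelfAdjoint q) (hq2 : IsIdempotentElem q)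
    (hr : IsSelfAdjoint r) (hr2 : IsIdempotentElem r)
    (hpr : p ≤ r) (hqr : q ≤ r)
    (hrmin : ∀ s, IsSelfAdjoint s → IsIdempotentElem s → p ≤ s → q ≤ s → r ≤ s)
    (α β : ℝ) (h0 : 0 ≤ α) (hαβ : α ≤ β) :
    SpecLE (α • p) (α • (r - q) + β • q) ∧
    SpecLE (β • q) (α • (r - q) + β • q) ∧
    ∀ z : H →L[ℂ] H, IsSelfAdjoint z → SpecLE (α • p) z → SpecLE (β • q) z →
      SpecLE (α • (r - q) + β • q) z := by
  have hP : IsStarProjection p := ⟨hp2, hp⟩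
  have hQ : IsStarProjection q := ⟨hq2, hq⟩
  have hR : IsStarProjection r := ⟨hr2, hr⟩
  have hrq : r * q = q := (hQ.le_iff_mul_eq_right hR).mp hqr
  have hinf := hP.isGreatest_spectralFamily_triple hQ hR hrq hpr
    (fun s hs => hrmin s hs.isSelfAdjoint hs.isIdempotentElem) h0 hαβ
  set dY := hQ.isResolutionOfIdentity_triple hR hrq
  rw [← hQ.calculus_triple hR hrq α β, ← hP.calculus_pair α, ← hQ.calculus_pair β]
  refine ⟨?_, ?_, fun z _ hPz hQz => ?_⟩
  · refine hP.isResolutionOfIdentity_pair.specLE_of_forall_le _ fun F hF l => ?_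
    exact dY.eq_spectralFamily _ hF ▸ (hinf l).1.2.1
  · refine hQ.isResolutionOfIdentity_pair.specLE_of_forall_le _ fun F hF l => ?_
    exact dY.eq_spectralFamily _ hF ▸ (hinf l).1.2.2
  · exact dY.specLE_of_forall_le _ fun F hF l =>
      (hinf l).2 ⟨hF.isStarProjection l, hPz.le_spectralFamily hF l, hQz.le_spectralFamily hF l⟩
end
end

section
/- Let $X$ be a Stonean (extremally disconnected compact Hausdorff) space and let $f \in C(X)$ be a nonzero function with $0 \le f \le 1$. Suppose that any two elements $g, h \in C(X)$ with $0 \le g \le f$ and $0 \le h \le f$ are comparable (i.e. $g \le h$ or $h \le g$ pointwise). Then $f = \lambda \chi_O$ for some $\lambda \in (0,1]$ and some clopen subset $O \subseteq X$. -/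
/-!
If `f` were nonzero at two points `x ≠ y`, a Urysohn function `φ` with `φ x = 0`, `φ y = 1`
would split `f` into `f * φ` and `f * (1 - φ)`, two elements of `[0, f]` that are incomparable
(the first is positive at `y` only, the second at `x` only). So the support of `f` is a single
point `x`; being open, it is clopen, and `f = f x • χ_{x}`.
-/

open Set Function

namespace ContinuousMap

variable {X : Type*} [TopologicalSpace X]

lemma mul_mem_Icc_zero_self {f φ : C(X, ℝ)} (hf : 0 ≤ f) (hφ₀ : 0 ≤ φ) (hφ₁ : φ ≤ 1) :
    f * φ ∈ Icc 0 f :=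
  ⟨mul_nonneg hf hφ₀, mul_le_of_le_one_right hf hφ₁⟩

theorem support_subsingleton_of_isChain_Icc [T35Space X] {f : C(X, ℝ)} (hf : 0 ≤ f)
    (hchain : IsChain (· ≤ ·) (Icc 0 f)) : (support f).Subsingleton := by
  intro x hx y hy
  by_contra hxy
  obtain ⟨φ, hφ, hφx, hφy⟩ :=
    CompletelyRegularSpace.completely_regular x {y} isClosed_singleton hxy
  let ψ : C(X, ℝ) := ⟨fun t => φ t, by fun_prop⟩
  have hψ₀ : 0 ≤ ψ := fun t => (φ t).2.1
  have hψ₁ : ψ ≤ 1 := fun t => (φ t).2.2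
  have hψx : ψ x = 0 := congrArg Subtype.val hφx
  have hψy : ψ y = 1 := congrArg Subtype.val (hφy rfl)
  rcases hchain.total (mul_mem_Icc_zero_self hf hψ₀ hψ₁)
      (mul_mem_Icc_zero_self hf (sub_nonneg.mpr hψ₁) (sub_le_self 1 hψ₀)) with h | h
  · have : f y ≤ 0 := by simpa [hψy] using h y
    exact hy (this.antisymm (hf y))
  · have : f x ≤ 0 := by simpa [hψx] using h x
    exact hx (this.antisymm (hf x))

end ContinuousMap

theorem stmt19_general {X : Type*} [TopologicalSpace X] [CompactSpace X] [T2Space X]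
    (f : C(X, ℝ)) (hf0 : 0 ≤ f) (hf1 : f ≤ 1) (hfne : f ≠ 0)
    (hcomp : ∀ g h : C(X, ℝ), 0 ≤ g → g ≤ f → 0 ≤ h → h ≤ f → g ≤ h ∨ h ≤ g) :
    ∃ (l : ℝ) (O : Set X), 0 < l ∧ l ≤ 1 ∧ IsClopen O ∧
      ∀ t : X, f t = Set.indicator O (fun _ => l) t := by
  have hchain : IsChain (· ≤ ·) (Icc 0 f) := fun g hg h hh _ => hcomp g h hg.1 hg.2 hh.1 hh.2
  obtain ⟨x, hx⟩ : (support f).Nonempty :=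
    support_nonempty_iff.mpr fun h => hfne (ContinuousMap.ext (congrFun h))
  have hsupp : support f = {x} :=
    (ContinuousMap.support_subsingleton_of_isChain_Icc hf0 hchain).eq_singleton_of_mem hx
  refine ⟨f x, {x}, (hf0 x).lt_of_ne' hx, hf1 x,
    ⟨isClosed_singleton, hsupp ▸ f.continuous.isOpen_support⟩, fun t => ?_⟩
  rcases eq_or_ne t x with rfl | ht
  · simp
  · simp [ht, ← notMem_support, hsupp]

/-- On a Stonean space `X`, a nonzero effect `f ∈ C(X)` such that any two elements
between `0` and `f` are comparable must be of the form `λ χ_O` for some `λ ∈ (0,1]`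
and some clopen `O ⊆ X`. -/
theorem stmt19 {X : Type*} [TopologicalSpace X] [CompactSpace X] [T2Space X]
    [ExtremallyDisconnected X]
    (f : C(X, ℝ)) (hf0 : 0 ≤ f) (hf1 : f ≤ 1) (hfne : f ≠ 0)
    (hcomp : ∀ g h : C(X, ℝ), 0 ≤ g → g ≤ f → 0 ≤ h → h ≤ f → g ≤ h ∨ h ≤ g) :
    ∃ (l : ℝ) (O : Set X), 0 < l ∧ l ≤ 1 ∧ IsClopen O ∧
      ∀ t : X, f t = Set.indicator O (fun _ => l) t :=
  stmt19_general f hf0 hf1 hfne hcomp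
end
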